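/- arXiv:1901.06174 — 5 statements merged into one kernel-verified Lean document; each statement's English description precedes it below -/
import Mathlib

section
/- Let g: ℝ → ℝ be 2π-periodic and α-Hölder continuous with seminorm [g]_{0,α}, for some α ∈ (0,1). Define for r > 1 and φ ∈ ℝ: ω(re^{iφ}) = ∫_{-π}^{π} g(τ+φ) · r sin τ / (r² + 1 - 2r cos τ) dτ. Then there is a constant C depending only on α such that ‖ω‖_∞ ≤ C [g]_{0,α} on the annulus 1 < |x| ≤ 2. -/
/-!
The kernel `r sin τ / (r² + 1 - 2 r cos τ)` is odd in `τ`, so subtracting the constant `g φ` from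
`g (τ + φ)` does not change the integral. The new integrand is at most `[g]_α |τ| ^ α` times the
kernel, and Jordan's inequality `1 - cos τ ≥ 2 τ² / π²` bounds the kernel by `π² / (4 |τ|)` uniformly
in `r > 0`. What remains is the integrable singularity `|τ| ^ (α - 1)`, with integral `2 π ^ α / α`.
-/

open Real Set Filter Topology MeasureTheory intervalIntegral

lemma continuous_of_abs_sub_le_rpow {f : ℝ → ℝ} {M α : ℝ} (hα : 0 < α)
    (hf : ∀ x y, |f x - f y| ≤ M * |x - y| ^ α) : Continuous f := by
  refine continuous_iff_continuousAt.2 fun x₀ => ?_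
  rw [ContinuousAt, tendsto_iff_dist_tendsto_zero]
  have hbound : Tendsto (fun x => M * |x - x₀| ^ α) (𝓝 x₀) (𝓝 0) := by
    have hcont : Continuous fun x => M * |x - x₀| ^ α :=
      ((continuous_sub_right x₀).abs.rpow_const fun _ => Or.inr hα.le).const_mul M
    simpa [zero_rpow hα.ne'] using hcont.tendsto x₀
  exact squeeze_zero (fun _ => dist_nonneg) (fun x => hf x x₀) hbound

section AbsRpow

variable {β : ℝ}

lemma intervalIntegrable_abs_rpow (hβ : -1 < β) (a b : ℝ) :
    IntervalIntegrable (fun x => |x| ^ β) volume a b := by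
  have hpos : ∀ c, 0 ≤ c → IntervalIntegrable (fun x => |x| ^ β) volume 0 c := fun c hc =>
    (intervalIntegrable_rpow' hβ).congr fun x hx => by
      rw [uIoc_of_le hc] at hx
      simp only [abs_of_pos hx.1]
  have hzero : ∀ c, IntervalIntegrable (fun x => |x| ^ β) volume 0 c := fun c => by
    rcases le_total 0 c with hc | hc
    · exact hpos c hc
    · simpa using (IntervalIntegrable.iff_comp_neg).mp (hpos (-c) (by linarith))
  exact (hzero a).symm.trans (hzero b)

lemma integral_abs_rpow_of_nonneg (hβ : -1 < β) {a : ℝ} (ha : 0 ≤ a) :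
    ∫ x in (0)..a, |x| ^ β = a ^ (β + 1) / (β + 1) := by
  rw [integral_congr (g := fun x => x ^ β) fun x hx => ?_, integral_rpow (Or.inl hβ),
    zero_rpow (by linarith), sub_zero]
  rw [uIcc_of_le ha] at hx
  simp only [abs_of_nonneg hx.1]

lemma integral_neg_self_abs_rpow (hβ : -1 < β) {a : ℝ} (ha : 0 ≤ a) :
    ∫ x in -a..a, |x| ^ β = 2 * a ^ (β + 1) / (β + 1) := by
  have hneg : ∫ x in -a..0, |x| ^ β = ∫ x in (0)..a, |x| ^ β := by
    simpa using (integral_comp_neg (a := 0) (b := a) fun x => |x| ^ β).symm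
  rw [← integral_add_adjacent_intervals (b := 0) (intervalIntegrable_abs_rpow hβ _ _)
    (intervalIntegrable_abs_rpow hβ _ _), hneg, integral_abs_rpow_of_nonneg hβ ha]
  ring

end AbsRpow

section Odd

variable {K : ℝ → ℝ}

lemma integral_neg_self_eq_zero_of_odd (hK : ∀ x, K (-x) = -K x) (a : ℝ) :
    ∫ x in -a..a, K x = 0 := by
  have h := integral_comp_neg (a := -a) (b := a) K
  simp only [hK, neg_neg, intervalIntegral.integral_neg] at h
  linarith

lemma integral_mul_odd_eq_integral_sub_mul (hK : ∀ x, K (-x) = -K x) {f : ℝ → ℝ} {a : ℝ}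
    (hfK : IntervalIntegrable (fun x => f x * K x) volume (-a) a)
    (hKi : IntervalIntegrable K volume (-a) a) (c : ℝ) :
    ∫ x in -a..a, f x * K x = ∫ x in -a..a, (f x - c) * K x := by
  simp_rw [sub_mul]
  rw [integral_sub hfK (hKi.const_mul c), intervalIntegral.integral_const_mul,
    integral_neg_self_eq_zero_of_odd hK, mul_zero, sub_zero]

end Odd

noncomputable def conjugatePoissonKernel (r τ : ℝ) : ℝ :=
  r * sin τ / (r ^ 2 + 1 - 2 * r * cos τ)

section ConjugatePoissonKernel

variable {r : ℝ}

lemma conjugatePoissonKernel_neg (r τ : ℝ) :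
    conjugatePoissonKernel r (-τ) = -conjugatePoissonKernel r τ := by
  simp [conjugatePoissonKernel, neg_div]

lemma continuous_conjugatePoissonKernel (hr : 0 < r) (hr1 : r ≠ 1) :
    Continuous (conjugatePoissonKernel r) := by
  refine (continuous_const.mul continuous_sin).div (by fun_prop) fun τ => ne_of_gt ?_
  nlinarith [sq_pos_of_ne_zero (sub_ne_zero.2 hr1), cos_le_one τ]

lemma abs_mul_conjugatePoissonKernel_le (hr : 0 ≤ r) {τ : ℝ} (hτ : |τ| ≤ π) :
    |τ| * |conjugatePoissonKernel r τ| ≤ π ^ 2 / 4 := by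
  have hjordan := cos_le_one_sub_mul_cos_sq hτ
  have hdenom : 4 * r * τ ^ 2 ≤ π ^ 2 * (r ^ 2 + 1 - 2 * r * cos τ) := by
    have : 2 / π ^ 2 * τ ^ 2 * π ^ 2 = 2 * τ ^ 2 := by field_simp
    nlinarith [mul_le_mul_of_nonneg_left hjordan (by positivity : (0 : ℝ) ≤ 2 * r * π ^ 2),
      mul_nonneg (sq_nonneg π) (sq_nonneg (r - 1))]
  have hsin : |τ| * |sin τ| ≤ τ ^ 2 := by
    nlinarith [abs_sin_le_abs (x := τ), abs_nonneg τ, sq_abs τ]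
  have hD : 0 ≤ r ^ 2 + 1 - 2 * r * cos τ := by
    nlinarith [sq_nonneg (r - 1), cos_le_one τ]
  rw [conjugatePoissonKernel, abs_div, abs_mul, abs_of_nonneg hr, abs_of_nonneg hD,
    ← mul_div_assoc]
  refine div_le_of_le_mul₀ hD (by positivity) ?_
  nlinarith [mul_le_mul_of_nonneg_left hsin (by positivity : (0 : ℝ) ≤ 4 * r)]

lemma abs_mul_conjugatePoissonKernel_le_rpow {x M α τ : ℝ} (hr : 0 ≤ r) (hM : 0 ≤ M)
    (hx : |x| ≤ M * |τ| ^ α) (hτ : |τ| ≤ π) :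
    |x * conjugatePoissonKernel r τ| ≤ π ^ 2 / 4 * M * |τ| ^ (α - 1) := by
  rcases eq_or_ne τ 0 with rfl | hτ0
  · simp only [conjugatePoissonKernel, sin_zero, mul_zero, zero_div, abs_zero]
    positivity
  have hτpos : 0 < |τ| := abs_pos.2 hτ0
  calc |x * conjugatePoissonKernel r τ|
      ≤ M * |τ| ^ α * |conjugatePoissonKernel r τ| := by
        rw [abs_mul]; gcongr
    _ = M * |τ| ^ (α - 1) * (|τ| * |conjugatePoissonKernel r τ|) := by
        rw [rpow_sub_one hτpos.ne']; field_simp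
    _ ≤ M * |τ| ^ (α - 1) * (π ^ 2 / 4) := by
        gcongr; exact abs_mul_conjugatePoissonKernel_le hr hτ
    _ = π ^ 2 / 4 * M * |τ| ^ (α - 1) := by ring

lemma abs_integral_mul_conjugatePoissonKernel_le {f : ℝ → ℝ} {c M α : ℝ} (hα : 0 < α)
    (hr : 0 < r) (hr1 : r ≠ 1) (hf : Continuous f) (hfc : ∀ τ, |f τ - c| ≤ M * |τ| ^ α) :
    |∫ τ in -π..π, f τ * conjugatePoissonKernel r τ| ≤ π ^ (α + 2) / (2 * α) * M := by
  have hM : 0 ≤ M := by simpa using (abs_nonneg _).trans (hfc 1)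
  have hK := continuous_conjugatePoissonKernel hr hr1
  rw [integral_mul_odd_eq_integral_sub_mul (conjugatePoissonKernel_neg r)
    ((hf.mul hK).intervalIntegrable _ _) (hK.intervalIntegrable _ _) c]
  have hbound : ∀ᵐ τ, τ ∈ Ioc (-π) π →
      ‖(f τ - c) * conjugatePoissonKernel r τ‖ ≤ π ^ 2 / 4 * M * |τ| ^ (α - 1) :=
    ae_of_all _ fun τ hτ =>
      abs_mul_conjugatePoissonKernel_le_rpow hr.le hM (hfc τ) (abs_le.2 ⟨hτ.1.le, hτ.2⟩)
  calc _ ≤ ∫ τ in -π..π, π ^ 2 / 4 * M * |τ| ^ (α - 1) :=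
        norm_integral_le_of_norm_le (by linarith [pi_pos]) hbound
          ((intervalIntegrable_abs_rpow (by linarith) _ _).const_mul _)
    _ = π ^ (α + 2) / (2 * α) * M := by
        rw [intervalIntegral.integral_const_mul,
          integral_neg_self_abs_rpow (by linarith) pi_pos.le, sub_add_cancel,
          rpow_add pi_pos, rpow_two]
        field_simp
        ring

end ConjugatePoissonKernel

theorem conjugate_poisson_sup_bound (α : ℝ) (hα : α ∈ Set.Ioo (0 : ℝ) 1) :
    ∃ C > 0, ∀ (g : ℝ → ℝ) (Cg : ℝ),
      (∀ x, g (x + 2 * π) = g x) →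
      (∀ x y, |g x - g y| ≤ Cg * |x - y| ^ α) →
      ∀ r φ : ℝ, 1 < r → r ≤ 2 →
        |∫ τ in (-π)..π,
            g (τ + φ) * (r * Real.sin τ / (r ^ 2 + 1 - 2 * r * Real.cos τ))|
          ≤ C * Cg := by
  refine ⟨π ^ (α + 2) / (2 * α), by have := hα.1; positivity, ?_⟩
  intro g Cg _ hg r φ hr _
  have hshift : ∀ τ, |g (τ + φ) - g φ| ≤ Cg * |τ| ^ α := fun τ => by
    simpa using hg (τ + φ) φ
  exact abs_integral_mul_conjugatePoissonKernel_le hα.1 (by linarith) hr.ne'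
    ((continuous_of_abs_sub_le_rpow hα.1 hg).comp (continuous_add_const φ)) hshift
end

section
/- Let g be 2π-periodic and α-Hölder (α ∈ (0,1)) with seminorm [g]_{0,α}, and define ω(re^{iφ}) = ∫_{-π}^{π} g(τ+φ) r sin τ/(r²+1-2r cos τ) dτ. Then for all φ ∈ [0,2π] and 1 < r₂ < r₁ ≤ 2 one has |ω(r₁e^{iφ}) - ω(r₂e^{iφ})| ≤ C r₁ [g]_{0,α} |r₁ - r₂|^α, with C depending only on α. -/
open Real MeasureTheory

noncomputable def cpK (r τ : ℝ) : ℝ := r * Real.sin τ / (r ^ 2 + 1 - 2 * r * Real.cos τ)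

lemma cpk_den_pos {r : ℝ} (hr : 1 < r) (τ : ℝ) : 0 < r ^ 2 + 1 - 2 * r * Real.cos τ := by
  nlinarith [Real.cos_le_one τ, mul_pos (sub_pos.2 hr) (sub_pos.2 hr),
    mul_nonneg (by linarith : (0:ℝ) ≤ 2 * r) (sub_nonneg.2 (Real.cos_le_one τ))]

lemma cpk_den_lower {r τ : ℝ} (hr : 1 < r) (hτ : |τ| ≤ π) :
    (r - 1) ^ 2 + 4 * r / π ^ 2 * τ ^ 2 ≤ r ^ 2 + 1 - 2 * r * Real.cos τ := by
  have h1 : Real.cos τ ≤ 1 - 2 / π ^ 2 * τ ^ 2 := Real.cos_le_one_sub_mul_cos_sq hτ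
  have h3 : 2 * r * Real.cos τ ≤ 2 * r * (1 - 2 / π ^ 2 * τ ^ 2) :=
    mul_le_mul_of_nonneg_left h1 (by linarith)
  have key : (r - 1) ^ 2 + 4 * r / π ^ 2 * τ ^ 2 = r ^ 2 + 1 - 2 * r * (1 - 2 / π ^ 2 * τ ^ 2) := by
    ring
  linarith

lemma cpk_abs_le {r τ : ℝ} (hr : 1 < r) (hτ : |τ| ≤ π) (hτ0 : τ ≠ 0) :
    |cpK r τ| ≤ π ^ 2 / (4 * |τ|) := by
  have hD := cpk_den_pos hr τ
  have hτa : 0 < |τ| := abs_pos.2 hτ0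
  have hπ := Real.pi_pos
  have hπ' : (π : ℝ) ≠ 0 := Real.pi_ne_zero
  have hden : 4 * r / π ^ 2 * τ ^ 2 ≤ r ^ 2 + 1 - 2 * r * Real.cos τ := by
    have h := cpk_den_lower hr hτ
    nlinarith [sq_nonneg (r - 1)]
  have hnum : |r * Real.sin τ| ≤ r * |τ| := by
    rw [abs_mul, abs_of_pos (by linarith : (0:ℝ) < r)]
    exact mul_le_mul_of_nonneg_left (Real.abs_sin_le_abs) (by linarith)
  have hdpos : 0 < 4 * r / π ^ 2 * τ ^ 2 := by positivity
  have h1 : |cpK r τ| = |r * Real.sin τ| / (r ^ 2 + 1 - 2 * r * Real.cos τ) := by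
    rw [cpK, abs_div, abs_of_pos hD]
  rw [h1]
  calc |r * Real.sin τ| / (r ^ 2 + 1 - 2 * r * Real.cos τ)
      ≤ (r * |τ|) / (4 * r / π ^ 2 * τ ^ 2) :=
        div_le_div₀ (by positivity) hnum hdpos hden
    _ = π ^ 2 / (4 * |τ|) := by
        rw [div_eq_div_iff (by positivity) (by positivity)]
        field_simp
        rw [← sq_abs τ]

lemma cpk_diff_eq {r₁ r₂ : ℝ} (h2 : 1 < r₂) (h12 : r₂ < r₁) (τ : ℝ) :
    cpK r₁ τ - cpK r₂ τ = (r₁ - r₂) * (1 - r₁ * r₂) * Real.sin τ /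
      ((r₁ ^ 2 + 1 - 2 * r₁ * Real.cos τ) * (r₂ ^ 2 + 1 - 2 * r₂ * Real.cos τ)) := by
  have hD1 := (cpk_den_pos (h2.trans h12) τ).ne'
  have hD2 := (cpk_den_pos h2 τ).ne'
  rw [cpK, cpK]
  rw [div_sub_div _ _ hD1 hD2]
  ring

lemma cpk_diff_boundA {r₁ r₂ τ : ℝ} (hr₁ : 1 < r₁) (hr₂ : 1 < r₂)
    (hτ : |τ| ≤ π) (hτ0 : τ ≠ 0) :
    |cpK r₁ τ - cpK r₂ τ| ≤ π ^ 2 / (2 * |τ|) := by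
  calc |cpK r₁ τ - cpK r₂ τ| ≤ |cpK r₁ τ| + |cpK r₂ τ| := abs_sub _ _
    _ ≤ π ^ 2 / (4 * |τ|) + π ^ 2 / (4 * |τ|) :=
        add_le_add (cpk_abs_le hr₁ hτ hτ0) (cpk_abs_le hr₂ hτ hτ0)
    _ = π ^ 2 / (2 * |τ|) := by ring

lemma cpk_diff_boundB {r₁ r₂ τ : ℝ} (hr₂ : 1 < r₂) (h12 : r₂ < r₁) (hr₁ : r₁ ≤ 2)
    (hτ : |τ| ≤ π) (hτ0 : τ ≠ 0) :
    |cpK r₁ τ - cpK r₂ τ| ≤ 3 * π ^ 3 / 16 * (r₁ - r₂) / τ ^ 2 := by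
  have hr₁1 : 1 < r₁ := hr₂.trans h12
  have hr1p : (0:ℝ) < r₁ - 1 := by linarith
  have hD1 := cpk_den_pos hr₁1 τ
  have hD2 := cpk_den_pos hr₂ τ
  have hτa : 0 < |τ| := abs_pos.2 hτ0
  have hπ := Real.pi_pos
  have hsq : τ ^ 2 = |τ| ^ 2 := (sq_abs τ).symm
  have hτ2 : 0 < τ ^ 2 := by rw [hsq]; exact pow_pos hτa 2
  have hnum : |(r₁ - r₂) * (1 - r₁ * r₂) * Real.sin τ| ≤ (r₁ - r₂) * (3 * (r₁ - 1)) * |τ| := by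
    rw [abs_mul, abs_mul, abs_of_pos (by linarith : (0:ℝ) < r₁ - r₂)]
    have h1 : |1 - r₁ * r₂| ≤ 3 * (r₁ - 1) := by
      rw [abs_sub_comm, abs_of_pos (by nlinarith : (0:ℝ) < r₁ * r₂ - 1)]
      nlinarith
    exact mul_le_mul (mul_le_mul_of_nonneg_left h1 (by linarith)) (Real.abs_sin_le_abs)
      (abs_nonneg _) (mul_nonneg (by linarith) (by linarith))
  have hnum0 : 0 ≤ (r₁ - r₂) * (3 * (r₁ - 1)) * |τ| :=
    mul_nonneg (mul_nonneg (by linarith) (by linarith)) (abs_nonneg _)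
  have hden1 : 4 / π * (r₁ - 1) * |τ| ≤ r₁ ^ 2 + 1 - 2 * r₁ * Real.cos τ := by
    have h := cpk_den_lower hr₁1 hτ
    have h2 : 4 / π ^ 2 * τ ^ 2 ≤ 4 * r₁ / π ^ 2 * τ ^ 2 := by
      have : (4:ℝ) / π ^ 2 ≤ 4 * r₁ / π ^ 2 := by
        apply div_le_div_of_nonneg_right ?_ (by positivity)
        linarith
      exact mul_le_mul_of_nonneg_right this (sq_nonneg τ)
    have h3 : 4 / π * (r₁ - 1) * |τ| ≤ (r₁ - 1) ^ 2 + 4 / π ^ 2 * τ ^ 2 := by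
      rw [hsq]
      have hπ' : (π:ℝ) ≠ 0 := Real.pi_ne_zero
      have key : (r₁ - 1) ^ 2 + 4 / π ^ 2 * |τ| ^ 2 - 4 / π * (r₁ - 1) * |τ|
          = (r₁ - 1 - 2 / π * |τ|) ^ 2 := by
        field_simp
        ring
      nlinarith [sq_nonneg (r₁ - 1 - 2 / π * |τ|)]
    linarith
  have hden2 : 4 / π ^ 2 * τ ^ 2 ≤ r₂ ^ 2 + 1 - 2 * r₂ * Real.cos τ := by
    have h := cpk_den_lower hr₂ hτ
    have h2 : 4 / π ^ 2 * τ ^ 2 ≤ 4 * r₂ / π ^ 2 * τ ^ 2 := by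
      have : (4:ℝ) / π ^ 2 ≤ 4 * r₂ / π ^ 2 := by
        apply div_le_div_of_nonneg_right ?_ (by positivity)
        linarith
      exact mul_le_mul_of_nonneg_right this (sq_nonneg τ)
    nlinarith [sq_nonneg (r₂ - 1)]
  have hdpos : 0 < 4 / π * (r₁ - 1) * |τ| * (4 / π ^ 2 * τ ^ 2) :=
    mul_pos (mul_pos (mul_pos (by positivity) hr1p) hτa) (mul_pos (by positivity) hτ2)
  rw [cpk_diff_eq hr₂ h12, abs_div, abs_of_pos (mul_pos hD1 hD2)]
  calc |(r₁ - r₂) * (1 - r₁ * r₂) * Real.sin τ| /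
        ((r₁ ^ 2 + 1 - 2 * r₁ * Real.cos τ) * (r₂ ^ 2 + 1 - 2 * r₂ * Real.cos τ))
      ≤ (r₁ - r₂) * (3 * (r₁ - 1)) * |τ| / (4 / π * (r₁ - 1) * |τ| * (4 / π ^ 2 * τ ^ 2)) :=
        div_le_div₀ hnum0 hnum hdpos
          (mul_le_mul hden1 hden2 (by positivity) (by linarith [hD1.le]))
    _ = 3 * π ^ 3 / 16 * (r₁ - r₂) / τ ^ 2 := by
        rw [div_eq_div_iff hdpos.ne' hτ2.ne']
        have hr10 : r₁ - 1 ≠ 0 := by linarith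
        have hπ' : (π:ℝ) ≠ 0 := Real.pi_ne_zero
        field_simp
        ring

lemma cpk_cont {r : ℝ} (hr : 1 < r) : Continuous (cpK r) := by
  apply Continuous.div (by continuity) (by continuity)
  exact fun τ => (cpk_den_pos hr τ).ne'

lemma cpk_integral_zero {r : ℝ} (hr : 1 < r) : ∫ τ in (-π)..π, cpK r τ = 0 := by
  have hc := cpk_cont hr
  have hodd : ∀ τ, cpK r (-τ) = -cpK r τ := by
    intro τ
    rw [cpK, cpK, Real.sin_neg, Real.cos_neg]
    ring
  have h1 : ∫ τ in (-π)..(0:ℝ), cpK r τ = -∫ τ in (0:ℝ)..π, cpK r τ := by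
    have h := intervalIntegral.integral_comp_neg (a := 0) (b := π) (fun τ => cpK r τ)
    simp only [hodd, neg_zero] at h
    rw [intervalIntegral.integral_neg] at h
    linarith
  have h2 := intervalIntegral.integral_add_adjacent_intervals
    (hc.intervalIntegrable (μ := volume) (-π) 0) (hc.intervalIntegrable (μ := volume) 0 π)
  rw [← h2, h1]
  ring

lemma holder_continuous_aux {g : ℝ → ℝ} {Cg α : ℝ} (hα : 0 < α)
    (hg : ∀ x y, |g x - g y| ≤ Cg * |x - y| ^ α) : Continuous g := by
  refine continuous_iff_continuousAt.2 fun x => ?_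
  rw [ContinuousAt, tendsto_iff_dist_tendsto_zero]
  have habs : Filter.Tendsto (fun y : ℝ => |y - x|) (nhds x) (nhds 0) := by
    have h0 : Filter.Tendsto (fun y : ℝ => |y - x|) (nhds x) (nhds |x - x|) :=
      ((continuous_id.sub continuous_const).abs).tendsto x
    simpa using h0
  have hr : Filter.Tendsto (fun y : ℝ => Cg * |y - x| ^ α) (nhds x) (nhds 0) := by
    have h1 : Filter.Tendsto (fun y : ℝ => |y - x| ^ α) (nhds x) (nhds ((0:ℝ) ^ α)) :=
      ((Real.continuousAt_rpow_const 0 α (Or.inr hα.le)).tendsto).comp habs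
    rw [Real.zero_rpow hα.ne'] at h1
    simpa using h1.const_mul Cg
  refine squeeze_zero (fun y => dist_nonneg) (fun y => ?_) hr
  rw [Real.dist_eq]
  exact hg y x

lemma abs_rpow_intervalIntegrable {s : ℝ} (hs : -1 < s) (a b : ℝ) :
    IntervalIntegrable (fun τ : ℝ => |τ| ^ s) volume a b := by
  have base : ∀ c : ℝ, 0 ≤ c → IntervalIntegrable (fun τ : ℝ => |τ| ^ s) volume 0 c := by
    intro c hc
    apply (intervalIntegral.intervalIntegrable_rpow' hs (a := 0) (b := c)).congr
    intro x hx
    rw [Set.uIoc_of_le hc] at hx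
    dsimp only; rw [abs_of_pos hx.1]
  have all : ∀ c : ℝ, IntervalIntegrable (fun τ : ℝ => |τ| ^ s) volume 0 c := by
    intro c
    rcases le_total 0 c with hc | hc
    · exact base c hc
    · refine (IntervalIntegrable.iff_comp_neg enorm_ne_top).mpr ?_
      simp only [abs_neg, neg_zero]
      exact base (-c) (by linarith)
  exact (all a).symm.trans (all b)

theorem conjugate_poisson_radial_holder (α : ℝ) (hα : α ∈ Set.Ioo (0 : ℝ) 1) :
    ∃ C > 0, ∀ (g : ℝ → ℝ) (Cg : ℝ),
      (∀ x, g (x + 2 * π) = g x) →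
      (∀ x y, |g x - g y| ≤ Cg * |x - y| ^ α) →
      ∀ r₁ r₂ φ : ℝ, φ ∈ Set.Icc (0 : ℝ) (2 * π) → 1 < r₂ → r₂ < r₁ → r₁ ≤ 2 →
        |(∫ τ in (-π)..π,
            g (τ + φ) * (r₁ * Real.sin τ / (r₁ ^ 2 + 1 - 2 * r₁ * Real.cos τ)))
          - ∫ τ in (-π)..π,
            g (τ + φ) * (r₂ * Real.sin τ / (r₂ ^ 2 + 1 - 2 * r₂ * Real.cos τ))|
          ≤ C * r₁ * Cg * |r₁ - r₂| ^ α := by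
  obtain ⟨hα0, hα1⟩ := hα
  have hπ := Real.pi_pos
  have h1α : (0:ℝ) < 1 - α := by linarith
  refine ⟨π ^ 2 / α + 3 * π ^ 3 / (8 * (1 - α)), by positivity, ?_⟩
  intro g Cg hper hg r₁ r₂ φ hφ hr₂ h12 hr₁
  have hr₁1 : 1 < r₁ := hr₂.trans h12
  set Δ : ℝ := r₁ - r₂ with hΔdef
  have hΔ0 : 0 < Δ := sub_pos.2 h12
  have hΔπ : Δ ≤ π := by
    have h3 := Real.pi_gt_three
    rw [hΔdef]; linarith
  have hCg : 0 ≤ Cg := le_trans (abs_nonneg _) (by simpa using hg 0 1)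
  have hgc : Continuous g := holder_continuous_aux hα0 hg
  have hKc1 : Continuous (cpK r₁) := cpk_cont hr₁1
  have hKc2 : Continuous (cpK r₂) := cpk_cont hr₂
  have hgφ : Continuous fun τ : ℝ => g (τ + φ) := hgc.comp (continuous_id.add continuous_const)
  set h : ℝ → ℝ := fun τ => (g (τ + φ) - g φ) * (cpK r₁ τ - cpK r₂ τ) with hh
  have hcont : Continuous h := (hgφ.sub continuous_const).mul (hKc1.sub hKc2)
  have hint : ∀ a b : ℝ, IntervalIntegrable h volume a b :=
    fun a b => hcont.intervalIntegrable a b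
  -- pointwise bounds
  have hptA : ∀ τ : ℝ, τ ≠ 0 → |τ| ≤ π → |h τ| ≤ Cg * (π ^ 2 / 2) * |τ| ^ (α - 1) := by
    intro τ hτ0 hτπ
    have hτa : 0 < |τ| := abs_pos.2 hτ0
    have hgb : |g (τ + φ) - g φ| ≤ Cg * |τ| ^ α := by
      have := hg (τ + φ) φ
      simpa using this
    calc |h τ| = |g (τ + φ) - g φ| * |cpK r₁ τ - cpK r₂ τ| := abs_mul _ _
      _ ≤ (Cg * |τ| ^ α) * (π ^ 2 / (2 * |τ|)) :=
          mul_le_mul hgb (cpk_diff_boundA hr₁1 hr₂ hτπ hτ0) (abs_nonneg _) (by positivity)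
      _ = Cg * (π ^ 2 / 2) * |τ| ^ (α - 1) := by
          rw [Real.rpow_sub_one (abs_ne_zero.2 hτ0)]
          field_simp
  have hptB : ∀ τ : ℝ, τ ≠ 0 → |τ| ≤ π →
      |h τ| ≤ Cg * (3 * π ^ 3 / 16) * Δ * |τ| ^ (α - 2) := by
    intro τ hτ0 hτπ
    have hτa : 0 < |τ| := abs_pos.2 hτ0
    have hgb : |g (τ + φ) - g φ| ≤ Cg * |τ| ^ α := by
      have := hg (τ + φ) φ
      simpa using this
    calc |h τ| = |g (τ + φ) - g φ| * |cpK r₁ τ - cpK r₂ τ| := abs_mul _ _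
      _ ≤ (Cg * |τ| ^ α) * (3 * π ^ 3 / 16 * Δ / τ ^ 2) := by
          apply mul_le_mul hgb (cpk_diff_boundB hr₂ h12 hr₁ hτπ hτ0) (abs_nonneg _) (by positivity)
      _ = Cg * (3 * π ^ 3 / 16) * Δ * |τ| ^ (α - 2) := by
          rw [show α - 2 = α - (2:ℕ) by norm_num, Real.rpow_sub hτa, Real.rpow_natCast,
            ← sq_abs τ]
          field_simp
  -- reduce to the integral of h
  have hi1 : IntervalIntegrable (fun τ => g (τ + φ) * cpK r₁ τ) volume (-π) π :=
    (hgφ.mul hKc1).intervalIntegrable _ _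
  have hi2 : IntervalIntegrable (fun τ => g (τ + φ) * cpK r₂ τ) volume (-π) π :=
    (hgφ.mul hKc2).intervalIntegrable _ _
  have hi3 : IntervalIntegrable (fun τ => g φ * (cpK r₁ τ - cpK r₂ τ)) volume (-π) π :=
    (continuous_const.mul (hKc1.sub hKc2)).intervalIntegrable _ _
  have hz : ∫ τ in (-π)..π, g φ * (cpK r₁ τ - cpK r₂ τ) = 0 := by
    rw [intervalIntegral.integral_const_mul,
      intervalIntegral.integral_sub (hKc1.intervalIntegrable _ _) (hKc2.intervalIntegrable _ _),
      cpk_integral_zero hr₁1, cpk_integral_zero hr₂]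
    ring
  have step1 : (∫ τ in (-π)..π, g (τ + φ) * cpK r₁ τ) - (∫ τ in (-π)..π, g (τ + φ) * cpK r₂ τ)
      = ∫ τ in (-π)..π, h τ := by
    rw [← intervalIntegral.integral_sub hi1 hi2]
    have heq : (fun τ => g (τ + φ) * cpK r₁ τ - g (τ + φ) * cpK r₂ τ)
        = fun τ => h τ + g φ * (cpK r₁ τ - cpK r₂ τ) := by
      funext τ
      rw [hh]
      ring
    rw [heq, intervalIntegral.integral_add (hint _ _) hi3, hz, add_zero]
  have goal1 : (∫ τ in (-π)..π,
      g (τ + φ) * (r₁ * Real.sin τ / (r₁ ^ 2 + 1 - 2 * r₁ * Real.cos τ)))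
      = ∫ τ in (-π)..π, g (τ + φ) * cpK r₁ τ := rfl
  have goal2 : (∫ τ in (-π)..π,
      g (τ + φ) * (r₂ * Real.sin τ / (r₂ ^ 2 + 1 - 2 * r₂ * Real.cos τ)))
      = ∫ τ in (-π)..π, g (τ + φ) * cpK r₂ τ := rfl
  rw [goal1, goal2, step1]
  -- split the integral
  have hsplit : ∫ τ in (-π)..π, h τ = (∫ τ in (-π)..(-Δ), h τ) + (∫ τ in (-Δ)..Δ, h τ)
      + ∫ τ in Δ..π, h τ := by
    rw [intervalIntegral.integral_add_adjacent_intervals (hint (-π) (-Δ)) (hint (-Δ) Δ),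
      intervalIntegral.integral_add_adjacent_intervals (hint (-π) Δ) (hint Δ π)]
  -- the middle piece
  have hmid : |∫ τ in (-Δ)..Δ, h τ| ≤ Cg * π ^ 2 * Δ ^ α / α := by
    have haux : ∀ a b : ℝ, IntervalIntegrable (fun τ : ℝ => Cg * (π ^ 2 / 2) * |τ| ^ (α - 1))
        volume a b := fun a b =>
      (abs_rpow_intervalIntegrable (by linarith) a b).const_mul _
    have hmono : ∫ τ in (-Δ)..Δ, |h τ| ≤ ∫ τ in (-Δ)..Δ, Cg * (π ^ 2 / 2) * |τ| ^ (α - 1) := by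
      apply intervalIntegral.integral_mono_on (by linarith) (hcont.abs.intervalIntegrable _ _)
        (haux _ _)
      intro τ hτ
      rcases eq_or_ne τ 0 with rfl | hτ0
      · simp [hh, Real.zero_rpow (show α - 1 ≠ 0 by intro hc; rw [sub_eq_zero] at hc; linarith)]
      · apply hptA τ hτ0
        rw [Set.mem_Icc] at hτ
        rw [abs_le]
        constructor <;> linarith
    have h0Δ : ∫ τ in (0:ℝ)..Δ, |τ| ^ (α - 1) = Δ ^ α / α := by
      have he : ∫ τ in (0:ℝ)..Δ, |τ| ^ (α - 1) = ∫ τ in (0:ℝ)..Δ, τ ^ (α - 1) := by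
        apply intervalIntegral.integral_congr
        intro x hx
        rw [Set.uIcc_of_le hΔ0.le, Set.mem_Icc] at hx
        show |x| ^ (α - 1) = x ^ (α - 1)
        rw [abs_of_nonneg hx.1]
      rw [he, integral_rpow (Or.inl (by linarith))]
      rw [show α - 1 + 1 = α by ring, Real.zero_rpow hα0.ne']
      ring
    have hneg : ∫ τ in (-Δ)..(0:ℝ), |τ| ^ (α - 1) = Δ ^ α / α := by
      have hcn := intervalIntegral.integral_comp_neg (a := (0:ℝ)) (b := Δ)
        (fun τ => |τ| ^ (α - 1))
      simp only [abs_neg, neg_zero] at hcn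
      rw [← hcn, h0Δ]
    have hval : ∫ τ in (-Δ)..Δ, Cg * (π ^ 2 / 2) * |τ| ^ (α - 1) = Cg * π ^ 2 * Δ ^ α / α := by
      rw [intervalIntegral.integral_const_mul,
        ← intervalIntegral.integral_add_adjacent_intervals
          (abs_rpow_intervalIntegrable (by linarith : (-1:ℝ) < α - 1) (-Δ) 0)
          (abs_rpow_intervalIntegrable (by linarith : (-1:ℝ) < α - 1) 0 Δ),
        hneg, h0Δ]
      field_simp
      ring
    calc |∫ τ in (-Δ)..Δ, h τ| ≤ ∫ τ in (-Δ)..Δ, |h τ| :=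
          intervalIntegral.abs_integral_le_integral_abs (by linarith)
      _ ≤ ∫ τ in (-Δ)..Δ, Cg * (π ^ 2 / 2) * |τ| ^ (α - 1) := hmono
      _ = Cg * π ^ 2 * Δ ^ α / α := hval
  -- tail majorant integrability
  have htmaj : ∀ a b : ℝ, (0:ℝ) ∉ Set.uIcc a b →
      IntervalIntegrable (fun τ : ℝ => Cg * (3 * π ^ 3 / 16) * Δ * |τ| ^ (α - 2))
        volume a b := by
    intro a b h0
    apply ContinuousOn.intervalIntegrable
    apply ContinuousOn.mul continuousOn_const
    intro x hx
    have hx0 : x ≠ 0 := fun hc => h0 (hc ▸ hx)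
    apply ContinuousAt.continuousWithinAt
    exact (Real.continuousAt_rpow_const _ _ (Or.inl (abs_ne_zero.2 hx0))).comp
      continuous_abs.continuousAt
  have h0R : (0:ℝ) ∉ Set.uIcc Δ π := by
    rw [Set.uIcc_of_le hΔπ, Set.mem_Icc]
    intro hc
    linarith [hc.1]
  have h0L : (0:ℝ) ∉ Set.uIcc (-π) (-Δ) := by
    rw [Set.uIcc_of_le (by linarith), Set.mem_Icc]
    intro hc
    linarith [hc.2]
  have hΔα : Δ * Δ ^ (α - 1) = Δ ^ α := by
    rw [Real.rpow_sub_one hΔ0.ne']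
    field_simp
  have hrval : ∫ τ in Δ..π, |τ| ^ (α - 2) ≤ Δ ^ (α - 1) / (1 - α) := by
    have he : ∫ τ in Δ..π, |τ| ^ (α - 2) = ∫ τ in Δ..π, τ ^ (α - 2) := by
      apply intervalIntegral.integral_congr
      intro x hx
      rw [Set.uIcc_of_le hΔπ, Set.mem_Icc] at hx
      show |x| ^ (α - 2) = x ^ (α - 2)
      rw [abs_of_pos (lt_of_lt_of_le hΔ0 hx.1)]
    rw [he, integral_rpow (Or.inr ⟨by intro hc; linarith, h0R⟩)]
    rw [show α - 2 + 1 = α - 1 by ring]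
    have hπα : 0 ≤ π ^ (α - 1) := Real.rpow_nonneg hπ.le _
    have hflip : (π ^ (α - 1) - Δ ^ (α - 1)) / (α - 1)
        = (Δ ^ (α - 1) - π ^ (α - 1)) / (1 - α) := by
      rw [div_eq_div_iff (by linarith : (α:ℝ) - 1 ≠ 0) (by linarith : (1:ℝ) - α ≠ 0)]
      ring
    rw [hflip]
    exact (div_le_div_iff_of_pos_right h1α).mpr (by linarith)
  have hCg3 : 0 ≤ Cg * (3 * π ^ 3 / 16) * Δ :=
    mul_nonneg (mul_nonneg hCg (by positivity)) hΔ0.le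
  have hright : |∫ τ in Δ..π, h τ| ≤ Cg * (3 * π ^ 3 / 16) * Δ ^ α / (1 - α) := by
    have hmono : ∫ τ in Δ..π, |h τ| ≤
        ∫ τ in Δ..π, Cg * (3 * π ^ 3 / 16) * Δ * |τ| ^ (α - 2) := by
      apply intervalIntegral.integral_mono_on hΔπ (hcont.abs.intervalIntegrable _ _)
        (htmaj _ _ h0R)
      intro τ hτ
      rw [Set.mem_Icc] at hτ
      have hτ0 : τ ≠ 0 := by intro hc; rw [hc] at hτ; linarith [hτ.1]
      have hτπ : |τ| ≤ π := by rw [abs_le]; constructor <;> linarith [hτ.1, hτ.2]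
      exact hptB τ hτ0 hτπ
    calc |∫ τ in Δ..π, h τ| ≤ ∫ τ in Δ..π, |h τ| :=
          intervalIntegral.abs_integral_le_integral_abs hΔπ
      _ ≤ ∫ τ in Δ..π, Cg * (3 * π ^ 3 / 16) * Δ * |τ| ^ (α - 2) := hmono
      _ = Cg * (3 * π ^ 3 / 16) * Δ * ∫ τ in Δ..π, |τ| ^ (α - 2) :=
          intervalIntegral.integral_const_mul _ _
      _ ≤ Cg * (3 * π ^ 3 / 16) * Δ * (Δ ^ (α - 1) / (1 - α)) :=
          mul_le_mul_of_nonneg_left hrval hCg3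
      _ = Cg * (3 * π ^ 3 / 16) * Δ ^ α / (1 - α) := by
          rw [show Cg * (3 * π ^ 3 / 16) * Δ * (Δ ^ (α - 1) / (1 - α))
            = Cg * (3 * π ^ 3 / 16) * (Δ * Δ ^ (α - 1)) / (1 - α) by ring, hΔα]
  have hleft : |∫ τ in (-π)..(-Δ), h τ| ≤ Cg * (3 * π ^ 3 / 16) * Δ ^ α / (1 - α) := by
    have hmono : ∫ τ in (-π)..(-Δ), |h τ| ≤
        ∫ τ in (-π)..(-Δ), Cg * (3 * π ^ 3 / 16) * Δ * |τ| ^ (α - 2) := by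
      apply intervalIntegral.integral_mono_on (by linarith) (hcont.abs.intervalIntegrable _ _)
        (htmaj _ _ h0L)
      intro τ hτ
      rw [Set.mem_Icc] at hτ
      have hτ0 : τ ≠ 0 := by intro hc; rw [hc] at hτ; linarith [hτ.2]
      have hτπ : |τ| ≤ π := by rw [abs_le]; constructor <;> linarith [hτ.1, hτ.2]
      exact hptB τ hτ0 hτπ
    have hlval : ∫ τ in (-π)..(-Δ), |τ| ^ (α - 2) = ∫ τ in Δ..π, |τ| ^ (α - 2) := by
      have hcn := intervalIntegral.integral_comp_neg (a := Δ) (b := π)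
        (fun τ : ℝ => |τ| ^ (α - 2))
      simp only [abs_neg] at hcn
      exact hcn.symm
    calc |∫ τ in (-π)..(-Δ), h τ| ≤ ∫ τ in (-π)..(-Δ), |h τ| :=
          intervalIntegral.abs_integral_le_integral_abs (by linarith)
      _ ≤ ∫ τ in (-π)..(-Δ), Cg * (3 * π ^ 3 / 16) * Δ * |τ| ^ (α - 2) := hmono
      _ = Cg * (3 * π ^ 3 / 16) * Δ * ∫ τ in (-π)..(-Δ), |τ| ^ (α - 2) :=
          intervalIntegral.integral_const_mul _ _
      _ ≤ Cg * (3 * π ^ 3 / 16) * Δ * (Δ ^ (α - 1) / (1 - α)) := by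
          rw [hlval]
          exact mul_le_mul_of_nonneg_left hrval hCg3
      _ = Cg * (3 * π ^ 3 / 16) * Δ ^ α / (1 - α) := by
          rw [show Cg * (3 * π ^ 3 / 16) * Δ * (Δ ^ (α - 1) / (1 - α))
            = Cg * (3 * π ^ 3 / 16) * (Δ * Δ ^ (α - 1)) / (1 - α) by ring, hΔα]
  -- combine
  have hΔαnn : 0 ≤ Δ ^ α := Real.rpow_nonneg hΔ0.le α
  have hCpos : (0:ℝ) < π ^ 2 / α + 3 * π ^ 3 / (8 * (1 - α)) := by positivity
  calc |∫ τ in (-π)..π, h τ|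
      = |(∫ τ in (-π)..(-Δ), h τ) + (∫ τ in (-Δ)..Δ, h τ) + ∫ τ in Δ..π, h τ| := by
        rw [hsplit]
    _ ≤ |∫ τ in (-π)..(-Δ), h τ| + |∫ τ in (-Δ)..Δ, h τ| + |∫ τ in Δ..π, h τ| :=
        abs_add_three _ _ _
    _ ≤ Cg * (3 * π ^ 3 / 16) * Δ ^ α / (1 - α) + Cg * π ^ 2 * Δ ^ α / α
        + Cg * (3 * π ^ 3 / 16) * Δ ^ α / (1 - α) :=
        add_le_add (add_le_add hleft hmid) hright
    _ = (π ^ 2 / α + 3 * π ^ 3 / (8 * (1 - α))) * Cg * Δ ^ α := by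
        field_simp
        ring
    _ ≤ (π ^ 2 / α + 3 * π ^ 3 / (8 * (1 - α))) * r₁ * Cg * |Δ| ^ α := by
        rw [abs_of_pos hΔ0]
        nlinarith [mul_nonneg (mul_nonneg hCpos.le hCg) hΔαnn]
end

section
/- Let g be 2π-periodic and α-Hölder (α ∈ (0,1)), and ω as above. Then for r > 1 and any two points x₁ = re^{iφ₁}, x₂ = re^{iφ₂} on the same circle, |ω(x₁) - ω(x₂)| ≤ C r² [g]_{0,α} (r-1)^{α-1} |x₁ - x₂|, with C depending only on α. -/
/-!
Write `ω(φ) = ∫_{-π}^{π} g(τ + φ) K_r(τ) dτ`. By periodicity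
`ω(φ) = ∫ g(t) K_r(t - φ) dt`, so `ω'(φ) = -∫ g(τ + φ) K_r'(τ) dτ`, and since `∫ K_r' = 0`
this equals `-∫ (g(τ + φ) - g(φ)) K_r'(τ) dτ`. Jordan's inequality gives
`|K_r'(τ)| ≤ r² / ((r - 1)² + (4/π²) τ²)` on `[-π, π]`, and splitting at `|τ| = r - 1`,
`∫ |τ|^α / ((r - 1)² + (4/π²) τ²) dτ ≲ (r - 1)^(α - 1)`. Hence `ω` is Lipschitz in `φ`
with constant `≲ [g]_α r² (r - 1)^(α - 1)`; after reducing `φ₁ - φ₂` mod `2π` into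
`[-π, π]`, Jordan's inequality again compares `|φ₁ - φ₂|` with the chord
`|e^{iφ₁} - e^{iφ₂}|`.
-/

open Real intervalIntegral MeasureTheory

theorem two_div_sq_pi_mul_sq_le_one_sub_cos {τ : ℝ} (h : |τ| ≤ π) :
    2 / π ^ 2 * τ ^ 2 ≤ 1 - cos τ := by
  have hsin : 2 / π * |τ / 2| ≤ |sin (τ / 2)| :=
    mul_abs_le_abs_sin (by rw [abs_div, abs_two]; linarith)
  have hsq := pow_le_pow_left₀ (by positivity) hsin 2
  rw [mul_pow, sq_abs, sq_abs, sin_sq_eq_half_sub, show 2 * (τ / 2) = τ by ring] at hsq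
  have hπ : π ≠ 0 := pi_pos.ne'
  calc 2 / π ^ 2 * τ ^ 2 = 2 * ((2 / π) ^ 2 * (τ / 2) ^ 2) := by field_simp
    _ ≤ 1 - cos τ := by linarith

theorem two_div_pi_mul_abs_sub_le_norm_exp_sub_exp {a b : ℝ} (h : |a - b| ≤ π) :
    2 / π * |a - b| ≤ ‖Complex.exp (a * Complex.I) - Complex.exp (b * Complex.I)‖ := by
  have hfactor : Complex.exp (a * Complex.I) - Complex.exp (b * Complex.I)
      = Complex.exp (b * Complex.I) * (Complex.exp (Complex.I * ↑(a - b)) - 1) := by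
    rw [mul_sub, ← Complex.exp_add, mul_one]; push_cast; ring_nf
  rw [hfactor, norm_mul, Complex.norm_exp_ofReal_mul_I, one_mul,
    Complex.norm_exp_I_mul_ofReal_sub_one, norm_mul, Real.norm_two, Real.norm_eq_abs]
  have := mul_abs_le_abs_sin (x := (a - b) / 2) (by rw [abs_div, abs_two]; linarith)
  rw [abs_div, abs_two] at this
  linarith

noncomputable def conjPoissonKernel (r τ : ℝ) : ℝ :=
  r * sin τ / (r ^ 2 + 1 - 2 * r * cos τ)

noncomputable def conjPoissonKernelDeriv (r τ : ℝ) : ℝ :=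
  r * ((r ^ 2 + 1) * cos τ - 2 * r) / (r ^ 2 + 1 - 2 * r * cos τ) ^ 2

section Kernel

variable {r : ℝ}

theorem sq_sub_one_le_sq_add_one_sub_two_mul_cos (hr : 0 ≤ r) (τ : ℝ) :
    (r - 1) ^ 2 ≤ r ^ 2 + 1 - 2 * r * cos τ := by
  nlinarith [cos_le_one τ]

theorem sq_add_one_sub_two_mul_cos_pos (hr : 1 < r) (τ : ℝ) : 0 < r ^ 2 + 1 - 2 * r * cos τ :=
  lt_of_lt_of_le (by nlinarith) (sq_sub_one_le_sq_add_one_sub_two_mul_cos (by linarith) τ)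

theorem conjPoissonKernel_periodic (r : ℝ) :
    Function.Periodic (conjPoissonKernel r) (2 * π) := by
  intro τ; simp only [conjPoissonKernel, sin_add_two_pi, cos_add_two_pi]

theorem conjPoissonKernelDeriv_periodic (r : ℝ) :
    Function.Periodic (conjPoissonKernelDeriv r) (2 * π) := by
  intro τ; simp only [conjPoissonKernelDeriv, cos_add_two_pi]

theorem continuous_conjPoissonKernel (hr : 1 < r) : Continuous (conjPoissonKernel r) :=
  Continuous.div (by fun_prop) (by fun_prop) fun τ => (sq_add_one_sub_two_mul_cos_pos hr τ).ne'

theorem continuous_conjPoissonKernelDeriv (hr : 1 < r) :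
    Continuous (conjPoissonKernelDeriv r) :=
  Continuous.div (by fun_prop) (by fun_prop) fun τ =>
    pow_ne_zero 2 (sq_add_one_sub_two_mul_cos_pos hr τ).ne'

theorem hasDerivAt_conjPoissonKernel (hr : 1 < r) (τ : ℝ) :
    HasDerivAt (conjPoissonKernel r) (conjPoissonKernelDeriv r τ) τ := by
  have hnum : HasDerivAt (fun τ => r * sin τ) (r * cos τ) τ := (hasDerivAt_sin τ).const_mul r
  have hden : HasDerivAt (fun τ => r ^ 2 + 1 - 2 * r * cos τ) (2 * r * sin τ) τ := by
    simpa using ((hasDerivAt_cos τ).const_mul (2 * r)).const_sub (r ^ 2 + 1)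
  refine (hnum.div hden (sq_add_one_sub_two_mul_cos_pos hr τ).ne').congr_deriv ?_
  rw [conjPoissonKernelDeriv]
  congr 1
  linear_combination (-2) * r ^ 2 * sin_sq_add_cos_sq τ

theorem integral_conjPoissonKernelDeriv (hr : 1 < r) :
    ∫ τ in -π..π, conjPoissonKernelDeriv r τ = 0 := by
  rw [integral_eq_sub_of_hasDerivAt (fun τ _ => hasDerivAt_conjPoissonKernel hr τ)
    ((continuous_conjPoissonKernelDeriv hr).intervalIntegrable _ _)]
  simp [conjPoissonKernel]

theorem abs_conjPoissonKernelDeriv_le (hr : 1 < r) (τ : ℝ) :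
    |conjPoissonKernelDeriv r τ| ≤ r ^ 2 / (r ^ 2 + 1 - 2 * r * cos τ) := by
  have hD := sq_add_one_sub_two_mul_cos_pos hr τ
  have hnum : |r * ((r ^ 2 + 1) * cos τ - 2 * r)| ≤ r ^ 2 * (r ^ 2 + 1 - 2 * r * cos τ) := by
    rw [abs_mul, abs_of_pos (by linarith : 0 < r), pow_two, mul_assoc]
    refine mul_le_mul_of_nonneg_left (abs_le.2 ⟨?_, ?_⟩) (by linarith)
    · nlinarith [mul_nonneg (by nlinarith : (0 : ℝ) ≤ r ^ 2 - 1)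
        (by linarith [cos_le_one τ] : 0 ≤ r - cos τ)]
    · nlinarith [mul_le_mul_of_nonneg_left (cos_le_one τ)
        (by positivity : (0 : ℝ) ≤ 3 * r ^ 2 + 1), pow_pos (by linarith : (0 : ℝ) < r - 1) 3]
  rw [conjPoissonKernelDeriv, abs_div, abs_of_pos (pow_pos hD 2),
    div_le_div_iff₀ (pow_pos hD 2) hD]
  nlinarith

theorem abs_conjPoissonKernelDeriv_le_of_abs_le_pi (hr : 1 < r) {τ : ℝ} (hτ : |τ| ≤ π) :
    |conjPoissonKernelDeriv r τ| ≤ r ^ 2 / ((r - 1) ^ 2 + 4 / π ^ 2 * τ ^ 2) := by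
  refine (abs_conjPoissonKernelDeriv_le hr τ).trans
    (div_le_div_of_nonneg_left (by positivity) (by positivity) ?_)
  have h4 : 4 / π ^ 2 * τ ^ 2 = 2 * (2 / π ^ 2 * τ ^ 2) := by ring
  nlinarith [two_div_sq_pi_mul_sq_le_one_sub_cos hτ,
    mul_nonneg (by linarith : (0 : ℝ) ≤ r - 1) (by linarith [cos_le_one τ] : 0 ≤ 1 - cos τ)]

theorem abs_conjPoissonKernelDeriv_le_div_sq (hr : 1 < r) (τ : ℝ) :
    |conjPoissonKernelDeriv r τ| ≤ r ^ 2 / (r - 1) ^ 2 :=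
  (abs_conjPoissonKernelDeriv_le hr τ).trans <| div_le_div_of_nonneg_left (by positivity)
    (by nlinarith) (sq_sub_one_le_sq_add_one_sub_two_mul_cos (by linarith) τ)

end Kernel

theorem integral_rpow_div_sq_add_mul_sq_le {α ε b L : ℝ} (hα : α ∈ Set.Ioo 0 1) (hε : 0 < ε)
    (hb : 0 < b) (hL : 0 ≤ L) :
    ∫ t in 0..L, t ^ α / (ε ^ 2 + b * t ^ 2)
      ≤ (1 / (α + 1) + 1 / (b * (1 - α))) * ε ^ (α - 1) := by
  obtain ⟨hα0, hα1⟩ := hα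
  have hcont : Continuous fun t : ℝ => t ^ α / (ε ^ 2 + b * t ^ 2) :=
    (continuous_rpow_const hα0.le).div (by fun_prop) fun t => by positivity
  set L' := max L ε
  have hεL' : ε ≤ L' := le_max_right L ε
  have hextend : ∫ t in 0..L, t ^ α / (ε ^ 2 + b * t ^ 2)
      ≤ ∫ t in 0..L', t ^ α / (ε ^ 2 + b * t ^ 2) :=
    integral_mono_interval le_rfl hL (le_max_left L ε)
      (ae_restrict_of_forall_mem measurableSet_Ioc fun t ht => by
        have := rpow_nonneg ht.1.le α; positivity)
      (hcont.intervalIntegrable _ _)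
  have hnear : ∫ t in 0..ε, t ^ α / (ε ^ 2 + b * t ^ 2) ≤ 1 / (α + 1) * ε ^ (α - 1) := by
    calc ∫ t in 0..ε, t ^ α / (ε ^ 2 + b * t ^ 2) ≤ ∫ t in 0..ε, t ^ α / ε ^ 2 := by
          refine integral_mono_on hε.le (hcont.intervalIntegrable _ _)
            ((intervalIntegrable_rpow' (by linarith)).div_const _) fun t ht => ?_
          exact div_le_div_of_nonneg_left (rpow_nonneg ht.1 α) (by positivity)
            (by nlinarith [sq_nonneg t])
      _ = 1 / (α + 1) * ε ^ (α - 1) := by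
          rw [intervalIntegral.integral_div, integral_rpow (Or.inl (by linarith)),
            zero_rpow (by linarith), show α + 1 = (α - 1) + (2 : ℕ) by push_cast; ring,
            rpow_add_natCast hε.ne']
          field_simp
          ring_nf
  have hfar : ∫ t in ε..L', t ^ α / (ε ^ 2 + b * t ^ 2) ≤ 1 / (b * (1 - α)) * ε ^ (α - 1) := by
    have h0 : (0 : ℝ) ∉ Set.uIcc ε L' := by
      rw [Set.uIcc_of_le hεL']; exact fun h => (lt_irrefl 0) (hε.trans_le h.1)
    calc ∫ t in ε..L', t ^ α / (ε ^ 2 + b * t ^ 2) ≤ ∫ t in ε..L', t ^ (α - 2) / b := by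
          refine integral_mono_on hεL' (hcont.intervalIntegrable _ _)
            ((intervalIntegrable_rpow (Or.inr h0)).div_const _) fun t ht => ?_
          have ht0 : 0 < t := hε.trans_le ht.1
          rw [rpow_sub ht0, rpow_two, div_div, mul_comm (t ^ 2)]
          exact div_le_div_of_nonneg_left (rpow_nonneg ht0.le α) (by positivity)
            (by nlinarith)
      _ = (ε ^ (α - 1) - L' ^ (α - 1)) / (b * (1 - α)) := by
          rw [intervalIntegral.integral_div, integral_rpow (Or.inr ⟨by linarith, h0⟩),
            show α - 2 + 1 = α - 1 by ring]
          have : α - 1 ≠ 0 := by linarith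
          have : 1 - α ≠ 0 := by linarith
          field_simp
          ring
      _ ≤ 1 / (b * (1 - α)) * ε ^ (α - 1) := by
          rw [one_div_mul_eq_div]
          have := rpow_nonneg (hε.le.trans hεL') (α - 1)
          gcongr
          nlinarith
  calc ∫ t in 0..L, t ^ α / (ε ^ 2 + b * t ^ 2)
      ≤ (∫ t in 0..ε, t ^ α / (ε ^ 2 + b * t ^ 2))
          + ∫ t in ε..L', t ^ α / (ε ^ 2 + b * t ^ 2) := by
        rwa [integral_add_adjacent_intervals (hcont.intervalIntegrable _ _)
          (hcont.intervalIntegrable _ _)]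
    _ ≤ (1 / (α + 1) + 1 / (b * (1 - α))) * ε ^ (α - 1) := by linarith

theorem integral_abs_rpow_div_sq_add_mul_sq_le {α ε b L : ℝ} (hα : α ∈ Set.Ioo 0 1)
    (hε : 0 < ε) (hb : 0 < b) (hL : 0 ≤ L) :
    ∫ t in -L..L, |t| ^ α / (ε ^ 2 + b * t ^ 2)
      ≤ 2 * ((1 / (α + 1) + 1 / (b * (1 - α))) * ε ^ (α - 1)) := by
  have hcont : Continuous fun t : ℝ => |t| ^ α / (ε ^ 2 + b * t ^ 2) :=
    ((continuous_rpow_const hα.1.le).comp continuous_abs).div (by fun_prop) fun t => by positivity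
  have hhalf : ∫ t in 0..L, |t| ^ α / (ε ^ 2 + b * t ^ 2)
      = ∫ t in 0..L, t ^ α / (ε ^ 2 + b * t ^ 2) :=
    integral_congr fun t ht => by
      rw [Set.uIcc_of_le hL] at ht; simp only [abs_of_nonneg ht.1]
  have hsymm : ∫ t in -L..0, |t| ^ α / (ε ^ 2 + b * t ^ 2)
      = ∫ t in 0..L, |t| ^ α / (ε ^ 2 + b * t ^ 2) := by
    have := integral_comp_neg (a := 0) (b := L) fun t : ℝ => |t| ^ α / (ε ^ 2 + b * t ^ 2)
    simp only [abs_neg, neg_sq, neg_zero] at this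
    exact this.symm
  rw [← integral_add_adjacent_intervals (b := 0) (hcont.intervalIntegrable _ _)
    (hcont.intervalIntegrable _ _), hsymm, hhalf]
  linarith [integral_rpow_div_sq_add_mul_sq_le hα hε hb hL]

theorem Function.Periodic.intervalIntegral_comp_add_right {E : Type*} [NormedAddCommGroup E]
    [NormedSpace ℝ E] {f : ℝ → E} {T : ℝ} (hf : Function.Periodic f T) (t c : ℝ) :
    ∫ x in t..t + T, f (x + c) = ∫ x in t..t + T, f x := by
  rw [integral_comp_add_right, add_right_comm, hf.intervalIntegral_add_eq (t + c) t]

theorem intervalIntegral_mul_comp_sub_of_periodic {g k : ℝ → ℝ}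
    (hg : Function.Periodic g (2 * π)) (hk : Function.Periodic k (2 * π)) (φ : ℝ) :
    ∫ t in -π..π, g t * k (t - φ) = ∫ τ in -π..π, g (τ + φ) * k τ := by
  have := (hg.mul (hk.sub_const φ)).intervalIntegral_comp_add_right (-π) φ
  simp only [Pi.mul_apply, add_sub_cancel_right, show -π + 2 * π = π by ring] at this
  exact this.symm

theorem continuous_of_abs_sub_le_mul_rpow {g : ℝ → ℝ} {C α : ℝ} (hα : 0 < α)
    (hg : ∀ x y, |g x - g y| ≤ C * |x - y| ^ α) : Continuous g := by
  refine continuous_iff_continuousAt.2 fun x => tendsto_iff_dist_tendsto_zero.2 ?_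
  refine squeeze_zero (fun y => dist_nonneg) (fun y => (hg y x).trans_eq' (dist_eq _ _)) ?_
  have : Continuous fun y : ℝ => C * |y - x| ^ α := by fun_prop (disch := exact hα.le)
  simpa [zero_rpow hα.ne'] using this.tendsto x

theorem nonneg_of_abs_sub_le_mul_rpow {g : ℝ → ℝ} {C α : ℝ}
    (hg : ∀ x y, |g x - g y| ≤ C * |x - y| ^ α) : 0 ≤ C :=
  (abs_nonneg _).trans (by simpa using hg 1 0)

noncomputable def conjPoissonIntegral (g : ℝ → ℝ) (r φ : ℝ) : ℝ :=
  ∫ τ in -π..π, g (τ + φ) * conjPoissonKernel r τ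

section ConjPoissonIntegral

variable {g : ℝ → ℝ} {r : ℝ}

theorem conjPoissonIntegral_periodic (hg : Function.Periodic g (2 * π)) (r : ℝ) :
    Function.Periodic (conjPoissonIntegral g r) (2 * π) := by
  intro φ
  simp only [conjPoissonIntegral, ← add_assoc, hg _]

theorem hasDerivAt_conjPoissonIntegral (hg : Function.Periodic g (2 * π)) (hgc : Continuous g)
    (hr : 1 < r) (φ : ℝ) :
    HasDerivAt (conjPoissonIntegral g r)
      (-∫ τ in -π..π, g (τ + φ) * conjPoissonKernelDeriv r τ) φ := by
  have hK := continuous_conjPoissonKernel hr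
  have hK' := continuous_conjPoissonKernelDeriv hr
  have hG : conjPoissonIntegral g r
      = fun x => ∫ t in -π..π, g t * conjPoissonKernel r (t - x) :=
    funext fun x =>
      (intervalIntegral_mul_comp_sub_of_periodic hg (conjPoissonKernel_periodic r) x).symm
  rw [hG, ← intervalIntegral_mul_comp_sub_of_periodic hg (conjPoissonKernelDeriv_periodic r),
    ← intervalIntegral.integral_neg]
  refine (hasDerivAt_integral_of_dominated_loc_of_deriv_le (x₀ := φ) Filter.univ_mem
    (F := fun x t => g t * conjPoissonKernel r (t - x))
    (F' := fun x t => -(g t * conjPoissonKernelDeriv r (t - x)))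
    (bound := fun t => |g t| * (r ^ 2 / (r - 1) ^ 2))
    (Filter.Eventually.of_forall fun x =>
      (hgc.mul (hK.comp (continuous_sub_right x))).aestronglyMeasurable)
    ((hgc.mul (hK.comp (continuous_sub_right φ))).intervalIntegrable _ _)
    (hgc.mul (hK'.comp (continuous_sub_right φ))).neg.aestronglyMeasurable
    (Filter.Eventually.of_forall fun t _ x _ => ?_)
    ((hgc.abs.mul continuous_const).intervalIntegrable _ _)
    (Filter.Eventually.of_forall fun t _ x _ => ?_)).2
  · rw [norm_neg, norm_mul, Real.norm_eq_abs, Real.norm_eq_abs]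
    exact mul_le_mul_of_nonneg_left (abs_conjPoissonKernelDeriv_le_div_sq hr _) (abs_nonneg _)
  · simpa using ((hasDerivAt_conjPoissonKernel hr (t - x)).comp x
      ((hasDerivAt_id x).const_sub t)).const_mul (g t)

theorem integral_mul_conjPoissonKernelDeriv_eq_integral_sub_mul (hgc : Continuous g)
    (hr : 1 < r) (φ : ℝ) :
    ∫ τ in -π..π, g (τ + φ) * conjPoissonKernelDeriv r τ
      = ∫ τ in -π..π, (g (τ + φ) - g φ) * conjPoissonKernelDeriv r τ := by
  have hK' := continuous_conjPoissonKernelDeriv hr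
  simp only [sub_mul]
  rw [intervalIntegral.integral_sub
    ((by fun_prop : Continuous fun τ => g (τ + φ) * conjPoissonKernelDeriv r τ).intervalIntegrable
      _ _)
    ((by fun_prop : Continuous fun τ => g φ * conjPoissonKernelDeriv r τ).intervalIntegrable _ _),
    intervalIntegral.integral_const_mul, integral_conjPoissonKernelDeriv hr, mul_zero, sub_zero]

theorem abs_integral_mul_conjPoissonKernelDeriv_le {α Cg : ℝ} (hα : α ∈ Set.Ioo 0 1)
    (hg : ∀ x y, |g x - g y| ≤ Cg * |x - y| ^ α) (hr : 1 < r) (φ : ℝ) :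
    |∫ τ in -π..π, g (τ + φ) * conjPoissonKernelDeriv r τ|
      ≤ 2 * (1 / (α + 1) + π ^ 2 / (4 * (1 - α))) * (Cg * r ^ 2 * (r - 1) ^ (α - 1)) := by
  have hgc := continuous_of_abs_sub_le_mul_rpow hα.1 hg
  have hK' := continuous_conjPoissonKernelDeriv hr
  have hπ := pi_pos
  have hcont : Continuous fun τ : ℝ => |τ| ^ α / ((r - 1) ^ 2 + 4 / π ^ 2 * τ ^ 2) :=
    ((continuous_rpow_const hα.1.le).comp continuous_abs).div (by fun_prop) fun τ => by
      have : 0 < (r - 1) ^ 2 := pow_pos (by linarith) 2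
      positivity
  have hpointwise : ∀ τ ∈ Set.Icc (-π) π, |(g (τ + φ) - g φ) * conjPoissonKernelDeriv r τ|
      ≤ Cg * r ^ 2 * (|τ| ^ α / ((r - 1) ^ 2 + 4 / π ^ 2 * τ ^ 2)) := by
    intro τ hτ
    have hτπ : |τ| ≤ π := abs_le.2 hτ
    have hholder : |g (τ + φ) - g φ| ≤ Cg * |τ| ^ α := by simpa using hg (τ + φ) φ
    calc |(g (τ + φ) - g φ) * conjPoissonKernelDeriv r τ|
        ≤ Cg * |τ| ^ α * (r ^ 2 / ((r - 1) ^ 2 + 4 / π ^ 2 * τ ^ 2)) := by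
          rw [abs_mul]
          exact mul_le_mul hholder (abs_conjPoissonKernelDeriv_le_of_abs_le_pi hr hτπ)
            (abs_nonneg _) ((abs_nonneg _).trans hholder)
      _ = Cg * r ^ 2 * (|τ| ^ α / ((r - 1) ^ 2 + 4 / π ^ 2 * τ ^ 2)) := by ring
  have hb : (0 : ℝ) < 4 / π ^ 2 := by positivity
  calc |∫ τ in -π..π, g (τ + φ) * conjPoissonKernelDeriv r τ|
      ≤ ∫ τ in -π..π, |(g (τ + φ) - g φ) * conjPoissonKernelDeriv r τ| := by
        rw [integral_mul_conjPoissonKernelDeriv_eq_integral_sub_mul hgc hr]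
        exact abs_integral_le_integral_abs (by linarith)
    _ ≤ ∫ τ in -π..π, Cg * r ^ 2 * (|τ| ^ α / ((r - 1) ^ 2 + 4 / π ^ 2 * τ ^ 2)) :=
        integral_mono_on (by linarith)
          ((by fun_prop : Continuous fun τ =>
            |(g (τ + φ) - g φ) * conjPoissonKernelDeriv r τ|).intervalIntegrable _ _)
          ((continuous_const.mul hcont).intervalIntegrable _ _) hpointwise
    _ = Cg * r ^ 2 * ∫ τ in -π..π, |τ| ^ α / ((r - 1) ^ 2 + 4 / π ^ 2 * τ ^ 2) :=
        intervalIntegral.integral_const_mul _ _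
    _ ≤ Cg * r ^ 2 * (2 * ((1 / (α + 1) + 1 / (4 / π ^ 2 * (1 - α))) * (r - 1) ^ (α - 1))) := by
        have hCg := nonneg_of_abs_sub_le_mul_rpow hg
        gcongr
        exact integral_abs_rpow_div_sq_add_mul_sq_le hα (by linarith) hb hπ.le
    _ = 2 * (1 / (α + 1) + π ^ 2 / (4 * (1 - α))) * (Cg * r ^ 2 * (r - 1) ^ (α - 1)) := by
        field_simp

theorem abs_conjPoissonIntegral_sub_le {α Cg : ℝ} (hα : α ∈ Set.Ioo 0 1)
    (hg_per : Function.Periodic g (2 * π)) (hg : ∀ x y, |g x - g y| ≤ Cg * |x - y| ^ α)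
    (hr : 1 < r) (φ₁ φ₂ : ℝ) :
    |conjPoissonIntegral g r φ₁ - conjPoissonIntegral g r φ₂|
      ≤ 2 * (1 / (α + 1) + π ^ 2 / (4 * (1 - α))) * (Cg * r ^ 2 * (r - 1) ^ (α - 1))
        * |φ₁ - φ₂| := by
  have hgc := continuous_of_abs_sub_le_mul_rpow hα.1 hg
  simpa only [Real.norm_eq_abs] using convex_univ.norm_image_sub_le_of_norm_hasDerivWithin_le
    (fun φ _ => (hasDerivAt_conjPoissonIntegral hg_per hgc hr φ).hasDerivWithinAt)
    (fun φ _ => by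
      rw [Real.norm_eq_abs, abs_neg]
      exact abs_integral_mul_conjPoissonKernelDeriv_le hα hg hr φ)
    (Set.mem_univ φ₂) (Set.mem_univ φ₁)

end ConjPoissonIntegral

theorem exists_int_abs_sub_add_int_mul_le {T : ℝ} (hT : 0 < T) (a b : ℝ) :
    ∃ k : ℤ, |a - (b + k * T)| ≤ T / 2 := by
  refine ⟨round ((a - b) / T), ?_⟩
  have h := mul_le_mul_of_nonneg_left (abs_sub_round ((a - b) / T)) hT.le
  rw [← abs_of_pos hT, ← abs_mul, abs_of_pos hT] at h
  calc |a - (b + round ((a - b) / T) * T)| = |T * ((a - b) / T - round ((a - b) / T))| := by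
        congr 1; field_simp; ring
    _ ≤ T / 2 := by linarith

theorem Function.Periodic.abs_sub_le_mul_norm_exp_sub {G : ℝ → ℝ}
    (hG : Function.Periodic G (2 * π)) {M : ℝ} (hM : ∀ a b, |G a - G b| ≤ M * |a - b|)
    (φ₁ φ₂ : ℝ) :
    |G φ₁ - G φ₂|
      ≤ π / 2 * M * ‖Complex.exp (φ₁ * Complex.I) - Complex.exp (φ₂ * Complex.I)‖ := by
  have hπ := pi_pos
  have hM0 : 0 ≤ M := by simpa using (abs_nonneg _).trans (hM 1 0)
  obtain ⟨k, hk⟩ := exists_int_abs_sub_add_int_mul_le (by positivity : 0 < 2 * π) φ₁ φ₂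
  rw [show 2 * π / 2 = π by ring] at hk
  have hGk : G (φ₂ + k * (2 * π)) = G φ₂ := hG.int_mul k φ₂
  have hexpk : Complex.exp (↑(φ₂ + k * (2 * π)) * Complex.I)
      = Complex.exp (φ₂ * Complex.I) := by
    rw [show (↑(φ₂ + k * (2 * π)) * Complex.I : ℂ)
        = φ₂ * Complex.I + k * (2 * π * Complex.I) by push_cast; ring,
      Complex.exp_add, Complex.exp_int_mul_two_pi_mul_I, mul_one]
  have hchord := two_div_pi_mul_abs_sub_le_norm_exp_sub_exp hk
  rw [hexpk] at hchord
  calc |G φ₁ - G φ₂| = |G φ₁ - G (φ₂ + k * (2 * π))| := by rw [hGk]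
    _ ≤ M * |φ₁ - (φ₂ + k * (2 * π))| := hM _ _
    _ ≤ M * (π / 2 * ‖Complex.exp (φ₁ * Complex.I) - Complex.exp (φ₂ * Complex.I)‖) := by
        gcongr
        calc |φ₁ - (φ₂ + k * (2 * π))|
            = π / 2 * (2 / π * |φ₁ - (φ₂ + k * (2 * π))|) := by field_simp
          _ ≤ _ := by gcongr
    _ = _ := by ring

theorem conjugate_poisson_angular_lipschitz (α : ℝ) (hα : α ∈ Set.Ioo (0 : ℝ) 1) :
    ∃ C > 0, ∀ (g : ℝ → ℝ) (Cg : ℝ),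
      (∀ x, g (x + 2 * π) = g x) →
      (∀ x y, |g x - g y| ≤ Cg * |x - y| ^ α) →
      ∀ r φ₁ φ₂ : ℝ, 1 < r →
        |(∫ τ in (-π)..π,
            g (τ + φ₁) * (r * Real.sin τ / (r ^ 2 + 1 - 2 * r * Real.cos τ)))
          - ∫ τ in (-π)..π,
            g (τ + φ₂) * (r * Real.sin τ / (r ^ 2 + 1 - 2 * r * Real.cos τ))|
          ≤ C * r ^ 2 * Cg * (r - 1) ^ (α - 1)
            * ‖(r : ℂ) * Complex.exp (φ₁ * Complex.I)
                - (r : ℂ) * Complex.exp (φ₂ * Complex.I)‖ := by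
  set A := 2 * (1 / (α + 1) + π ^ 2 / (4 * (1 - α)))
  have hA : 0 < A := mul_pos two_pos (add_pos (one_div_pos.2 (by linarith [hα.1]))
    (div_pos (by positivity) (by linarith [hα.2])))
  refine ⟨π / 2 * A, by positivity, fun g Cg hg_per hg r φ₁ φ₂ hr => ?_⟩
  show |conjPoissonIntegral g r φ₁ - conjPoissonIntegral g r φ₂| ≤ _
  set M := Cg * r ^ 2 * (r - 1) ^ (α - 1)
  have hM : 0 ≤ M := mul_nonneg (mul_nonneg (nonneg_of_abs_sub_le_mul_rpow hg) (by positivity))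
    (rpow_nonneg (by linarith) _)
  set E := ‖Complex.exp (φ₁ * Complex.I) - Complex.exp (φ₂ * Complex.I)‖
  have hchord : |conjPoissonIntegral g r φ₁ - conjPoissonIntegral g r φ₂| ≤ π / 2 * (A * M) * E :=
    (conjPoissonIntegral_periodic hg_per r).abs_sub_le_mul_norm_exp_sub
      (abs_conjPoissonIntegral_sub_le hα hg_per hg hr) φ₁ φ₂
  rw [← mul_sub, norm_mul, Complex.norm_real, Real.norm_of_nonneg (by linarith)]
  calc _ ≤ π / 2 * (A * M) * E := hchord
    _ ≤ π / 2 * (A * M) * E * r :=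
        le_mul_of_one_le_right (mul_nonneg (by positivity) (norm_nonneg _)) hr.le
    _ = π / 2 * A * r ^ 2 * Cg * (r - 1) ^ (α - 1) * (r * E) := by ring
end

section
/- Let n ∈ ℕ, R₀ > 0, a₁,…,a_n ∈ B(0,R₀) ⊂ ℝ², v₁,…,v_n > 0, and let λ > 1 satisfy (λ²-1)πR₀² = Σᵢvᵢ. Define σ = min{ min_i (1 - |a_i|/R₀)² / (v_i/Σv_k), min_{i≠j} |a_i - a_j|² / (R₀²(√(v_i/Σv_k) + √(v_j/Σv_k))²) }. If σ ≥ 1, or if σ < 1 and λ² < 1/(1-σ), then the trajectories z_i(t) = t a_i and radii L_i(t) = R₀ √((t²-1) v_i/Σv_k), t ∈ [1,λ], are such that for every t ∈ [1,λ] the closed disks closure(B(z_i(t), L_i(t))), i = 1,…,n, are pairwise disjoint and contained in B(0, tR₀); moreover Σᵢ πL_i(t)² = (t²-1)πR₀², z_i(1)=a_i, L_i(1)=0, and πL_i(λ)² = v_i. -/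
/-!
The packing condition says exactly that `t ^ 2 - 1 < σ * t ^ 2`, i.e. `1 - t⁻² < σ`, on `[1, λ]`.
Since `L_i(t) = R₀ √(t ^ 2 - 1) √w_i` with `w_i = v_i / Σ v_k`, squaring turns the containment
`L_i(t) + t ‖a_i‖ < t R₀` and the separation `L_i(t) + L_j(t) < t ‖a_i - a_j‖` into
`(t ^ 2 - 1) D < t ^ 2 q`, where `σ ≤ q / D` is one of the quantities whose infimum defines `σ`.
-/

open Real Metric

theorem sub_one_lt_mul_sq {σ lam t : ℝ} (hcase : 1 ≤ σ ∨ (σ < 1 ∧ lam ^ 2 < 1 / (1 - σ)))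
    (ht : t ∈ Set.Icc 1 lam) : t ^ 2 - 1 < σ * t ^ 2 := by
  obtain ⟨ht1, htlam⟩ := ht
  have ht_sq : t ^ 2 ≤ lam ^ 2 := pow_le_pow_left₀ (by linarith) htlam 2
  rcases hcase with hσ | ⟨hσ, hlam⟩
  · nlinarith
  · have hσ' : 0 < 1 - σ := by linarith
    have : (1 - σ) * lam ^ 2 < 1 := by rwa [lt_div_iff₀ hσ', mul_comm] at hlam
    nlinarith

theorem sqrt_sub_one_mul_lt {σ t D q : ℝ} (ht : 1 ≤ t) (hD : 0 < D) (hq : 0 ≤ q)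
    (hσt : t ^ 2 - 1 < σ * t ^ 2) (hσ : σ ≤ q ^ 2 / D) : √((t ^ 2 - 1) * D) < t * q := by
  have hσD : σ * D ≤ q ^ 2 := (le_div_iff₀ hD).mp hσ
  have key : (t ^ 2 - 1) * D < (t * q) ^ 2 :=
    calc (t ^ 2 - 1) * D < σ * t ^ 2 * D := mul_lt_mul_of_pos_right hσt hD
      _ = t ^ 2 * (σ * D) := by ring
      _ ≤ t ^ 2 * q ^ 2 := by gcongr
      _ = (t * q) ^ 2 := by ring
  rw [← sqrt_sq (by positivity : 0 ≤ t * q)]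
  exact sqrt_lt_sqrt (mul_nonneg (by nlinarith) hD.le) key

section Radii

variable {σ t R : ℝ} (ht : 1 ≤ t) (hσt : t ^ 2 - 1 < σ * t ^ 2) (hR : 0 < R)
include ht hσt hR

theorem radius_lt_of_le_boundary {α w : ℝ} (hα : α < R) (hw : 0 < w)
    (hσ : σ ≤ (1 - α / R) ^ 2 / w) : R * √((t ^ 2 - 1) * w) < t * (R - α) := by
  have hq : 0 ≤ 1 - α / R := by rw [sub_nonneg, div_le_one hR]; exact hα.le
  calc R * √((t ^ 2 - 1) * w) < R * (t * (1 - α / R)) :=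
        mul_lt_mul_of_pos_left (sqrt_sub_one_mul_lt ht hw hq hσt hσ) hR
    _ = t * (R - α) := by field_simp

theorem radius_add_radius_lt_of_le_separation {d wi wj : ℝ} (hd : 0 ≤ d) (hwi : 0 < wi)
    (hσ : σ ≤ d ^ 2 / (R ^ 2 * (√wi + √wj) ^ 2)) :
    R * √((t ^ 2 - 1) * wi) + R * √((t ^ 2 - 1) * wj) < t * d := by
  have hs : 0 ≤ t ^ 2 - 1 := by nlinarith
  have hD : 0 < (√wi + √wj) ^ 2 := by have := sqrt_pos.mpr hwi; positivity
  have hσ' : σ ≤ (d / R) ^ 2 / (√wi + √wj) ^ 2 := by rwa [div_pow, div_div]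
  have key := sqrt_sub_one_mul_lt ht hD (div_nonneg hd hR.le) hσt hσ'
  rw [sqrt_mul hs, sqrt_sq (by positivity)] at key
  calc R * √((t ^ 2 - 1) * wi) + R * √((t ^ 2 - 1) * wj)
        = R * (√(t ^ 2 - 1) * (√wi + √wj)) := by rw [sqrt_mul hs, sqrt_mul hs]; ring
    _ < R * (t * (d / R)) := mul_lt_mul_of_pos_left key hR
    _ = t * d := by field_simp

end Radii

theorem sum_pi_mul_radius_sq {ι : Type*} [Fintype ι] {w : ι → ℝ} (hw : ∀ i, 0 ≤ w i)
    (hw_sum : ∑ i, w i = 1) {s : ℝ} (hs : 0 ≤ s) (R : ℝ) :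
    ∑ i, π * (R * √(s * w i)) ^ 2 = s * π * R ^ 2 := by
  simp_rw [mul_pow, sq_sqrt (mul_nonneg hs (hw _))]
  calc ∑ i, π * (R ^ 2 * (s * w i)) = s * π * R ^ 2 * ∑ i, w i := by
        rw [Finset.mul_sum]; exact Finset.sum_congr rfl fun i _ => by ring
    _ = s * π * R ^ 2 := by rw [hw_sum, mul_one]

theorem attainable_configuration_general (n : ℕ) (R₀ : ℝ) (hR₀ : 0 < R₀)
    (a : Fin n → EuclideanSpace ℝ (Fin 2)) (v : Fin n → ℝ)
    (ha : ∀ i, ‖a i‖ < R₀) (hv : ∀ i, 0 < v i)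
    (lam : ℝ) (hlam : 1 < lam)
    (hsum : (lam ^ 2 - 1) * π * R₀ ^ 2 = ∑ i, v i)
    (σ : ℝ)
    (hσ : σ = sInf
      ((Set.range fun i => (1 - ‖a i‖ / R₀) ^ 2 / (v i / ∑ k, v k)) ∪
        {x | ∃ i j, i ≠ j ∧ x = ‖a i - a j‖ ^ 2 /
          (R₀ ^ 2 * (Real.sqrt (v i / ∑ k, v k) + Real.sqrt (v j / ∑ k, v k)) ^ 2)}))
    (hcase : 1 ≤ σ ∨ (σ < 1 ∧ lam ^ 2 < 1 / (1 - σ))) :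
    (∀ t ∈ Set.Icc (1 : ℝ) lam,
      (∀ i j, i ≠ j →
        Disjoint
          (Metric.closedBall (t • a i) (R₀ * Real.sqrt ((t ^ 2 - 1) * (v i / ∑ k, v k))))
          (Metric.closedBall (t • a j) (R₀ * Real.sqrt ((t ^ 2 - 1) * (v j / ∑ k, v k))))) ∧
      (∀ i,
        Metric.closedBall (t • a i) (R₀ * Real.sqrt ((t ^ 2 - 1) * (v i / ∑ k, v k)))
          ⊆ Metric.ball (0 : EuclideanSpace ℝ (Fin 2)) (t * R₀)) ∧
      (∑ i, π * (R₀ * Real.sqrt ((t ^ 2 - 1) * (v i / ∑ k, v k))) ^ 2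
        = (t ^ 2 - 1) * π * R₀ ^ 2)) ∧
    (∀ i, (1 : ℝ) • a i = a i ∧
      R₀ * Real.sqrt (((1 : ℝ) ^ 2 - 1) * (v i / ∑ k, v k)) = 0 ∧
      π * (R₀ * Real.sqrt ((lam ^ 2 - 1) * (v i / ∑ k, v k))) ^ 2 = v i) := by
  set S := ∑ k, v k
  have hlam_sq : 0 < lam ^ 2 - 1 := by nlinarith
  have hS : 0 < S := hsum ▸ by positivity
  have hw : ∀ i, 0 < v i / S := fun i => div_pos (hv i) hS
  have hw_sum : ∑ i, v i / S = 1 := by rw [← Finset.sum_div, div_self hS.ne']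
  have hbdd : BddBelow ((Set.range fun i => (1 - ‖a i‖ / R₀) ^ 2 / (v i / S)) ∪
      {x | ∃ i j, i ≠ j ∧ x = ‖a i - a j‖ ^ 2 / (R₀ ^ 2 * (√(v i / S) + √(v j / S)) ^ 2)}) := by
    refine ⟨0, ?_⟩
    rintro x (⟨i, rfl⟩ | ⟨i, j, -, rfl⟩) <;> have := hw i <;> positivity
  refine ⟨fun t ht => ⟨fun i j hij => ?_, fun i => ?_, ?_⟩, fun i => ⟨one_smul ℝ _, by simp, ?_⟩⟩
  · apply closedBall_disjoint_closedBall
    rw [dist_smul₀, norm_of_nonneg (by linarith [ht.1]), dist_eq_norm]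
    exact radius_add_radius_lt_of_le_separation ht.1 (sub_one_lt_mul_sq hcase ht) hR₀
      (norm_nonneg _) (hw i) (hσ ▸ csInf_le hbdd (Or.inr ⟨i, j, hij, rfl⟩))
  · apply closedBall_subset_ball'
    rw [dist_zero_right, norm_smul, norm_of_nonneg (by linarith [ht.1])]
    have := radius_lt_of_le_boundary ht.1 (sub_one_lt_mul_sq hcase ht) hR₀ (ha i) (hw i)
      (hσ ▸ csInf_le hbdd (Or.inl ⟨i, rfl⟩))
    linarith
  · exact sum_pi_mul_radius_sq (fun i => (hw i).le) hw_sum (by nlinarith [ht.1]) R₀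
  · rw [mul_pow, sq_sqrt (mul_nonneg hlam_sq.le (hw i).le)]
    rw [← hsum]
    field_simp

theorem attainable_configuration (n : ℕ) (hn : 0 < n) (R₀ : ℝ) (hR₀ : 0 < R₀)
    (a : Fin n → EuclideanSpace ℝ (Fin 2)) (v : Fin n → ℝ)
    (ha : ∀ i, ‖a i‖ < R₀) (hv : ∀ i, 0 < v i)
    (lam : ℝ) (hlam : 1 < lam)
    (hsum : (lam ^ 2 - 1) * π * R₀ ^ 2 = ∑ i, v i)
    (σ : ℝ)
    (hσ : σ = sInf
      ((Set.range fun i => (1 - ‖a i‖ / R₀) ^ 2 / (v i / ∑ k, v k)) ∪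
        {x | ∃ i j, i ≠ j ∧ x = ‖a i - a j‖ ^ 2 /
          (R₀ ^ 2 * (Real.sqrt (v i / ∑ k, v k) + Real.sqrt (v j / ∑ k, v k)) ^ 2)}))
    (hcase : 1 ≤ σ ∨ (σ < 1 ∧ lam ^ 2 < 1 / (1 - σ))) :
    (∀ t ∈ Set.Icc (1 : ℝ) lam,
      (∀ i j, i ≠ j →
        Disjoint
          (Metric.closedBall (t • a i) (R₀ * Real.sqrt ((t ^ 2 - 1) * (v i / ∑ k, v k))))
          (Metric.closedBall (t • a j) (R₀ * Real.sqrt ((t ^ 2 - 1) * (v j / ∑ k, v k))))) ∧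
      (∀ i,
        Metric.closedBall (t • a i) (R₀ * Real.sqrt ((t ^ 2 - 1) * (v i / ∑ k, v k)))
          ⊆ Metric.ball (0 : EuclideanSpace ℝ (Fin 2)) (t * R₀)) ∧
      (∑ i, π * (R₀ * Real.sqrt ((t ^ 2 - 1) * (v i / ∑ k, v k))) ^ 2
        = (t ^ 2 - 1) * π * R₀ ^ 2)) ∧
    (∀ i, (1 : ℝ) • a i = a i ∧
      R₀ * Real.sqrt (((1 : ℝ) ^ 2 - 1) * (v i / ∑ k, v k)) = 0 ∧
      π * (R₀ * Real.sqrt ((lam ^ 2 - 1) * (v i / ∑ k, v k))) ^ 2 = v i) :=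
  attainable_configuration_general n R₀ hR₀ a v ha hv lam hlam hsum σ hσ hcase
end

section
/- Let L ≥ 0 and define u: ℝ²\{0} → ℝ² by u(x) = √(|x|² + L²) · x/|x|. Then det Du(x) = 1 for all x ≠ 0, and for 0 < ε < R, ∫_{ε<|x|<R} |Du|²/2 dx ≤ πR² + πL² log R + πL² |log ε|. -/
/-!
Away from the origin `u` is a radial map `y ↦ (ρ ‖y‖ / ‖y‖) • y` with profile `ρ r = √(r² + L²)`.
Its differential at `x` stretches by `ρ(r) / r` orthogonally to `x` and by `ρ'(r) = r / ρ(r)` along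
`x`, where `r = ‖x‖`. In the plane the determinant is the product of the two stretches, which is
`1`, and `|Du|²` is the sum of their squares, `ρ² / r² + r² / ρ² ≤ 2 + L² / r²`. Integrating this
radial bound in polar coordinates over the annulus `ε < |x| < R` gives
`π (R² - ε²) + π L² (log R - log ε)`.
-/

open Real MeasureTheory Metric Set
open scoped RealInnerProductSpace

namespace LinearMap

theorem det_id_add_smulRight {R M : Type*} [CommRing R] [AddCommGroup M] [Module R M]
    [Module.Free R M] [Module.Finite R M] (f : M →ₗ[R] R) (v : M) :
    LinearMap.det (LinearMap.id + f.smulRight v) = 1 + f v := by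
  let b := Module.Free.chooseBasis R M
  rw [← LinearMap.det_toMatrix b, map_add, LinearMap.toMatrix_id, LinearMap.toMatrix_smulRight,
    Matrix.vecMulVec_eq Unit, Matrix.det_one_add_replicateCol_mul_replicateRow]
  conv_rhs => rw [← b.sum_repr v, map_sum]
  simp [dotProduct, mul_comm]

end LinearMap

section RadialMaps

variable {E : Type*} [NormedAddCommGroup E] [InnerProductSpace ℝ E]

/-- For `x ≠ 0`, the linear map acting as `α` on `(ℝ ∙ x)ᗮ` and as `β` on `ℝ ∙ x`. -/
noncomputable def radialFDeriv (α β : ℝ) (x : E) : E →L[ℝ] E :=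
  α • ContinuousLinearMap.id ℝ E + (((β - α) / ‖x‖ ^ 2) • innerSL ℝ x).smulRight x

@[simp]
theorem radialFDeriv_apply (α β : ℝ) (x v : E) :
    radialFDeriv α β x v = α • v + ((β - α) / ‖x‖ ^ 2 * ⟪x, v⟫) • x := by
  simp [radialFDeriv]

theorem det_radialFDeriv [FiniteDimensional ℝ E] {α : ℝ} (hα : α ≠ 0) (β : ℝ) {x : E}
    (hx : x ≠ 0) :
    LinearMap.det (radialFDeriv α β x : E →ₗ[ℝ] E) = α ^ (Module.finrank ℝ E - 1) * β := by
  have hx2 : ‖x‖ ^ 2 ≠ 0 := by positivity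
  have hfactor : (radialFDeriv α β x : E →ₗ[ℝ] E) =
      α • (LinearMap.id + (((β - α) / (α * ‖x‖ ^ 2)) • innerₛₗ ℝ x).smulRight x) := by
    ext v
    simp only [ContinuousLinearMap.coe_coe, radialFDeriv_apply, LinearMap.smul_apply,
      LinearMap.add_apply, LinearMap.id_apply, LinearMap.smulRight_apply, innerₛₗ_apply_apply,
      smul_add, smul_smul, smul_eq_mul]
    field_simp
  obtain ⟨n, hn⟩ := Nat.exists_eq_add_one_of_ne_zero
    (Module.finrank_pos_iff_exists_ne_zero (R := ℝ).2 ⟨x, hx⟩).ne'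
  rw [hfactor, LinearMap.det_smul, LinearMap.det_id_add_smulRight, hn, Nat.add_sub_cancel]
  simp only [LinearMap.smul_apply, innerₛₗ_apply_apply, real_inner_self_eq_norm_sq, smul_eq_mul]
  field_simp
  ring

theorem sum_norm_sq_radialFDeriv {ι : Type*} [Fintype ι] (b : OrthonormalBasis ι ℝ E)
    (α β : ℝ) {x : E} (hx : x ≠ 0) :
    ∑ i, ‖radialFDeriv α β x (b i)‖ ^ 2 = (Fintype.card ι - 1) * α ^ 2 + β ^ 2 := by
  set c := (β - α) / ‖x‖ ^ 2
  have hc : c * ‖x‖ ^ 2 = β - α := div_mul_cancel₀ _ (by positivity)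
  have hterm (i : ι) : ‖radialFDeriv α β x (b i)‖ ^ 2
      = α ^ 2 + (2 * α * c + c ^ 2 * ‖x‖ ^ 2) * ⟪x, b i⟫ ^ 2 := by
    rw [radialFDeriv_apply, norm_add_sq_real, norm_smul, norm_smul, b.orthonormal.1,
      inner_smul_left, inner_smul_right, real_inner_comm x]
    simp only [Real.norm_eq_abs, mul_pow, sq_abs, RCLike.conj_to_real]
    ring
  simp only [hterm, Finset.sum_add_distrib, ← Finset.mul_sum, b.sum_sq_inner_left,
    Finset.sum_const, Finset.card_univ, nsmul_eq_mul]
  linear_combination (2 * α + c * ‖x‖ ^ 2 + β - α) * hc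

theorem hasStrictFDerivAt_norm {x : E} (hx : x ≠ 0) :
    HasStrictFDerivAt (‖·‖) (‖x‖⁻¹ • innerSL ℝ x) x := by
  have := (hasStrictFDerivAt_norm_sq x).sqrt (by positivity)
  simp only [Real.sqrt_sq (norm_nonneg _)] at this
  convert this using 1
  ext v
  simp only [smul_apply, coe_innerSL_apply, smul_eq_mul, one_div,
    mul_inv_rev, nsmul_eq_mul, Nat.cast_ofNat]
  field_simp

theorem hasFDerivAt_radial {ρ : ℝ → ℝ} {ρ' : ℝ} {x : E} (hx : x ≠ 0)
    (hρ : HasDerivAt ρ ρ' ‖x‖) :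
    HasFDerivAt (fun y => (ρ ‖y‖ / ‖y‖) • y) (radialFDeriv (ρ ‖x‖ / ‖x‖) ρ' x) x := by
  have hr : ‖x‖ ≠ 0 := norm_ne_zero_iff.2 hx
  refine (((hρ.div (hasDerivAt_id _) hr).comp_hasFDerivAt x
    (hasStrictFDerivAt_norm hx).hasFDerivAt).smul (hasFDerivAt_id x)).congr_fderiv ?_
  ext v
  simp only [radialFDeriv, add_apply, smul_apply,
    ContinuousLinearMap.id_apply, ContinuousLinearMap.smulRight_apply, coe_innerSL_apply,
    smul_eq_mul, Function.comp_apply, Pi.div_apply, id_eq, mul_one, add_right_inj]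
  field_simp

end RadialMaps

theorem integral_annulus_fun_norm {E F : Type*} [NormedAddCommGroup E] [NormedSpace ℝ E]
    [Nontrivial E] [FiniteDimensional ℝ E] [MeasurableSpace E] [BorelSpace E] (μ : Measure E)
    [μ.IsAddHaarMeasure] [NormedAddCommGroup F] [NormedSpace ℝ F] (f : ℝ → F) {ε : ℝ}
    (hε : 0 ≤ ε) (R : ℝ) :
    ∫ x in ball 0 R \ closedBall 0 ε, f ‖x‖ ∂μ =
      Module.finrank ℝ E • μ.real (ball 0 1) •
        ∫ r in Ioo ε R, r ^ (Module.finrank ℝ E - 1) • f r := by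
  have hind : (ball (0 : E) R \ closedBall 0 ε).indicator (fun x => f ‖x‖) =
      fun x => (Ioo ε R).indicator f ‖x‖ := by
    ext x
    simp [indicator, and_comm]
  rw [← integral_indicator (measurableSet_ball.diff measurableSet_closedBall), hind,
    integral_fun_norm_addHaar, ← integral_indicator measurableSet_Ioo,
    ← integral_indicator measurableSet_Ioi]
  congr 3 with r
  by_cases hr : r ∈ Ioo ε R
  · simp [hr, hε.trans_lt hr.1]
  · simp [hr]

theorem integrableOn_annulus_fun_norm {E F : Type*} [NormedAddCommGroup E] [NormedSpace ℝ E]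
    [ProperSpace E] [MeasurableSpace E] [OpensMeasurableSpace E] (μ : Measure E)
    [IsFiniteMeasureOnCompacts μ] [NormedAddCommGroup F] {f : ℝ → F} {ε R : ℝ}
    (hf : ContinuousOn f (Icc ε R)) :
    IntegrableOn (fun x => f ‖x‖) (ball 0 R \ closedBall 0 ε) μ := by
  refine (ContinuousOn.integrableOn_compact ((isCompact_closedBall 0 R).diff isOpen_ball)
    (hf.comp continuous_norm.continuousOn fun x hx => ?_)).mono_set
      (sdiff_subset_sdiff ball_subset_closedBall ball_subset_closedBall)
  simpa [and_comm] using hx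

theorem integral_annulus_two_add_sq_div_norm_sq (L : ℝ) {ε R : ℝ} (hε : 0 < ε) (hεR : ε ≤ R) :
    ∫ x in ball (0 : EuclideanSpace ℝ (Fin 2)) R \ closedBall 0 ε, (2 + L ^ 2 / ‖x‖ ^ 2) / 2 =
      π * (R ^ 2 - ε ^ 2) + π * L ^ 2 * (log R - log ε) := by
  have hpos {r : ℝ} (hr : r ∈ uIcc ε R) : r ≠ 0 := (hε.trans_le (uIcc_of_le hεR ▸ hr).1).ne'
  have hcongr : EqOn (fun r : ℝ => r ^ (2 - 1) • ((2 + L ^ 2 / r ^ 2) / 2))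
      (fun r => r + L ^ 2 / 2 * r⁻¹) (uIcc ε R) := by
    intro r hr
    have := hpos hr
    simp only [smul_eq_mul]
    field_simp
    ring
  have hinv : IntervalIntegrable (fun r : ℝ => r⁻¹) volume ε R :=
    intervalIntegral.intervalIntegrable_inv (fun _ => hpos) continuousOn_id
  rw [integral_annulus_fun_norm volume (fun r => (2 + L ^ 2 / r ^ 2) / 2) hε.le,
    finrank_euclideanSpace_fin, measureReal_def, EuclideanSpace.volume_ball_fin_two,
    ← integral_Ioc_eq_integral_Ioo, ← intervalIntegral.integral_of_le hεR,
    intervalIntegral.integral_congr hcongr, intervalIntegral.integral_add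
      intervalIntegral.intervalIntegrable_id (hinv.const_mul _),
    integral_id, intervalIntegral.integral_const_mul, integral_inv_of_pos hε (hε.trans_le hεR),
    log_div (hε.trans_le hεR).ne' hε.ne']
  simp only [ENNReal.ofReal_one, one_pow, one_mul, ENNReal.toReal_ofReal pi_nonneg, smul_eq_mul,
    nsmul_eq_mul, Nat.cast_ofNat]
  ring

section Cavitation

variable {E : Type*} [NormedAddCommGroup E] [InnerProductSpace ℝ E]

noncomputable def cavitationMap (L : ℝ) (y : E) : E :=
  (√(‖y‖ ^ 2 + L ^ 2) / ‖y‖) • y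

theorem hasDerivAt_sqrt_sq_add_sq (L : ℝ) {r : ℝ} (hr : r ≠ 0) :
    HasDerivAt (fun r => √(r ^ 2 + L ^ 2)) (r / √(r ^ 2 + L ^ 2)) r := by
  have := ((hasDerivAt_pow 2 r).add_const (L ^ 2)).sqrt (by positivity)
  convert this using 1
  field_simp
  ring

theorem fderiv_cavitationMap (L : ℝ) {x : E} (hx : x ≠ 0) :
    fderiv ℝ (cavitationMap L) x =
      radialFDeriv (√(‖x‖ ^ 2 + L ^ 2) / ‖x‖) (‖x‖ / √(‖x‖ ^ 2 + L ^ 2)) x :=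
  (hasFDerivAt_radial hx (hasDerivAt_sqrt_sq_add_sq L (norm_ne_zero_iff.2 hx))).fderiv

theorem det_fderiv_cavitationMap [FiniteDimensional ℝ E] (hE : Module.finrank ℝ E = 2)
    (L : ℝ) {x : E} (hx : x ≠ 0) :
    LinearMap.det (fderiv ℝ (cavitationMap L) x : E →ₗ[ℝ] E) = 1 := by
  have hr : 0 < ‖x‖ := norm_pos_iff.2 hx
  have hs : 0 < √(‖x‖ ^ 2 + L ^ 2) := sqrt_pos.2 (by positivity)
  rw [fderiv_cavitationMap L hx, det_radialFDeriv (by positivity) _ hx, hE, pow_one]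
  field_simp

theorem sum_norm_sq_fderiv_cavitationMap_le {ι : Type*} [Fintype ι] (hι : Fintype.card ι = 2)
    (b : OrthonormalBasis ι ℝ E) (L : ℝ) {x : E} (hx : x ≠ 0) :
    ∑ i, ‖fderiv ℝ (cavitationMap L) x (b i)‖ ^ 2 ≤ 2 + L ^ 2 / ‖x‖ ^ 2 := by
  have hr : 0 < ‖x‖ := norm_pos_iff.2 hx
  have hq : 0 < ‖x‖ ^ 2 + L ^ 2 := by positivity
  have hs2 : √(‖x‖ ^ 2 + L ^ 2) ^ 2 = ‖x‖ ^ 2 + L ^ 2 := sq_sqrt hq.le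
  have hradial : (‖x‖ / √(‖x‖ ^ 2 + L ^ 2)) ^ 2 ≤ 1 := by
    rw [div_pow, hs2, div_le_one hq]
    nlinarith
  have htangential : (√(‖x‖ ^ 2 + L ^ 2) / ‖x‖) ^ 2 = 1 + L ^ 2 / ‖x‖ ^ 2 := by
    rw [div_pow, hs2]
    field_simp
  rw [fderiv_cavitationMap L hx, sum_norm_sq_radialFDeriv b _ _ hx, hι, htangential]
  push_cast
  linarith

end Cavitation

theorem radial_cavitation_map_general (L : ℝ) (ε R : ℝ) (hε : 0 < ε) (hεR : ε < R) :
    (∀ x : EuclideanSpace ℝ (Fin 2), x ≠ 0 →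
      LinearMap.det ((fderiv ℝ (fun y : EuclideanSpace ℝ (Fin 2) =>
          (Real.sqrt (‖y‖ ^ 2 + L ^ 2) / ‖y‖) • y) x) :
            EuclideanSpace ℝ (Fin 2) →ₗ[ℝ] EuclideanSpace ℝ (Fin 2)) = 1) ∧
    (∫ x in Metric.ball (0 : EuclideanSpace ℝ (Fin 2)) R \ Metric.closedBall 0 ε,
        (∑ i, ‖fderiv ℝ (fun y : EuclideanSpace ℝ (Fin 2) =>
            (Real.sqrt (‖y‖ ^ 2 + L ^ 2) / ‖y‖) • y) x
          (EuclideanSpace.basisFun (Fin 2) ℝ i)‖ ^ 2) / 2)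
      ≤ π * R ^ 2 + π * L ^ 2 * Real.log R + π * L ^ 2 * |Real.log ε| := by
  refine ⟨fun x hx => det_fderiv_cavitationMap finrank_euclideanSpace_fin L hx, ?_⟩
  set A := ball (0 : EuclideanSpace ℝ (Fin 2)) R \ closedBall 0 ε
  have hA0 : ∀ x ∈ A, x ≠ 0 := by
    rintro x ⟨-, hx⟩ rfl
    exact hx (mem_closedBall_self hε.le)
  have hbound : ∀ x ∈ A,
      (∑ i, ‖fderiv ℝ (cavitationMap L) x (EuclideanSpace.basisFun (Fin 2) ℝ i)‖ ^ 2) / 2 ≤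
        (2 + L ^ 2 / ‖x‖ ^ 2) / 2 := fun x hx => by
    gcongr
    exact sum_norm_sq_fderiv_cavitationMap_le (Fintype.card_fin 2) _ L (hA0 x hx)
  have hint : IntegrableOn (fun x : EuclideanSpace ℝ (Fin 2) => (2 + L ^ 2 / ‖x‖ ^ 2) / 2) A :=
    integrableOn_annulus_fun_norm volume (f := fun r => (2 + L ^ 2 / r ^ 2) / 2)
      (((continuousOn_const.div (by fun_prop) fun r hr =>
        pow_ne_zero 2 (hε.trans_le hr.1).ne').const_add 2).div_const 2)
  calc _ ≤ ∫ x in A, (2 + L ^ 2 / ‖x‖ ^ 2) / 2 :=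
        integral_mono_of_nonneg (.of_forall fun x => by positivity) hint
          ((ae_restrict_iff' (measurableSet_ball.diff measurableSet_closedBall)).2
            (.of_forall hbound))
    _ = π * (R ^ 2 - ε ^ 2) + π * L ^ 2 * (log R - log ε) :=
        integral_annulus_two_add_sq_div_norm_sq L hε hεR.le
    _ ≤ π * R ^ 2 + π * L ^ 2 * log R + π * L ^ 2 * |log ε| := by
        have := mul_le_mul_of_nonneg_left (neg_le_abs (log ε)) (by positivity : 0 ≤ π * L ^ 2)
        nlinarith [pi_pos]

theorem radial_cavitation_map (L : ℝ) (hL : 0 ≤ L) (ε R : ℝ) (hε : 0 < ε) (hεR : ε < R) :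
    (∀ x : EuclideanSpace ℝ (Fin 2), x ≠ 0 →
      LinearMap.det ((fderiv ℝ (fun y : EuclideanSpace ℝ (Fin 2) =>
          (Real.sqrt (‖y‖ ^ 2 + L ^ 2) / ‖y‖) • y) x) :
            EuclideanSpace ℝ (Fin 2) →ₗ[ℝ] EuclideanSpace ℝ (Fin 2)) = 1) ∧
    (∫ x in Metric.ball (0 : EuclideanSpace ℝ (Fin 2)) R \ Metric.closedBall 0 ε,
        (∑ i, ‖fderiv ℝ (fun y : EuclideanSpace ℝ (Fin 2) =>
            (Real.sqrt (‖y‖ ^ 2 + L ^ 2) / ‖y‖) • y) x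
          (EuclideanSpace.basisFun (Fin 2) ℝ i)‖ ^ 2) / 2)
      ≤ π * R ^ 2 + π * L ^ 2 * Real.log R + π * L ^ 2 * |Real.log ε| :=
  radial_cavitation_map_general L ε R hε hεR
end
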